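/- arXiv:2210.07671 — 8 statements merged into one kernel-verified Lean document; each statement's English description precedes it below -/
import Mathlib

section
/- Let C be the middle-third Cantor set, i.e., the set of all sums ∑_{i≥1} a_i/3^i with a_i ∈ {0,2}. Then C + C = [0,2], where C + C denotes the Minkowski sum {x + y : x, y ∈ C}. -/
open Pointwise

/-- The linear Cantor set with digits in `A` in base `n`. -/
def linCantor (n : ℕ) (A : Set ℕ) : Set ℝ :=
  {x | ∃ a : ℕ → ℕ, (∀ i, a i ∈ A) ∧ x = ∑' i : ℕ, (a i : ℝ) / n ^ (i + 1)}

/-! Digit sets add and scale like the Cantor sets they generate, so `C + C` is the Cantor set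
with digits `{0, 2} + {0, 2} = 2·{0, 1, 2}`, that is `2·[0, 1]`, since every number of `[0, 1]`
has a base-`3` expansion. -/

namespace Real

theorem range_ofDigits {b : ℕ} (hb : 1 < b) : Set.range (ofDigits (b := b)) = Set.Icc 0 1 :=
  (Set.range_subset_iff.2 fun d =>
    Set.mem_Icc.2 ⟨ofDigits_nonneg d, ofDigits_le_one d⟩).antisymm
    (by simpa [Set.SurjOn] using ofDigits_SurjOn hb)

theorem ofDigits_eq_tsum {b : ℕ} (d : ℕ → Fin b) :
    ofDigits d = ∑' i, (d i : ℝ) / b ^ (i + 1) := by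
  simp only [ofDigits, ofDigitsTerm, div_eq_mul_inv]

end Real

theorem linCantor_Iio_eq_range_ofDigits (b : ℕ) :
    linCantor b (Set.Iio b) = Set.range (Real.ofDigits (b := b)) := by
  ext x
  constructor
  · rintro ⟨a, ha, rfl⟩
    exact ⟨fun i => ⟨a i, ha i⟩, Real.ofDigits_eq_tsum _⟩
  · rintro ⟨d, rfl⟩
    exact ⟨fun i => d i, fun i => (d i).isLt, Real.ofDigits_eq_tsum d⟩

theorem linCantor_Iio_eq_Icc {b : ℕ} (hb : 1 < b) : linCantor b (Set.Iio b) = Set.Icc 0 1 := by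
  rw [linCantor_Iio_eq_range_ofDigits, Real.range_ofDigits hb]

theorem summable_digit_div_pow {n M : ℕ} (hn : 1 < n) {a : ℕ → ℕ} (ha : ∀ i, a i ≤ M) :
    Summable fun i => (a i : ℝ) / n ^ (i + 1) := by
  have hgeom : Summable fun i => (M : ℝ) * (n : ℝ)⁻¹ ^ (i + 1) :=
    ((summable_nat_add_iff 1).2 (summable_geometric_of_lt_one (by positivity)
      (inv_lt_one_of_one_lt₀ (by exact_mod_cast hn)))).mul_left _
  refine .of_nonneg_of_le (fun i => by positivity) (fun i => ?_) hgeom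
  rw [inv_pow, ← div_eq_mul_inv]
  gcongr
  exact_mod_cast ha i

theorem linCantor_add {n : ℕ} (hn : 1 < n) {A B : Set ℕ} (hA : BddAbove A) (hB : BddAbove B) :
    linCantor n A + linCantor n B = linCantor n (A + B) := by
  obtain ⟨M, hM⟩ := hA
  obtain ⟨N, hN⟩ := hB
  have hsum : ∀ {a b : ℕ → ℕ}, (∀ i, a i ∈ A) → (∀ i, b i ∈ B) →
      ∑' i, (a i : ℝ) / n ^ (i + 1) + ∑' i, (b i : ℝ) / n ^ (i + 1) =
        ∑' i, ((a i + b i : ℕ) : ℝ) / n ^ (i + 1) := fun ha hb => by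
    push_cast
    simp_rw [add_div]
    exact ((summable_digit_div_pow hn fun i => hM (ha i)).tsum_add
      (summable_digit_div_pow hn fun i => hN (hb i))).symm
  ext x
  constructor
  · rintro ⟨_, ⟨a, ha, rfl⟩, _, ⟨b, hb, rfl⟩, rfl⟩
    exact ⟨a + b, fun i => Set.add_mem_add (ha i) (hb i), hsum ha hb⟩
  · rintro ⟨c, hc, rfl⟩
    choose a ha b hb hab using hc
    refine ⟨_, ⟨a, ha, rfl⟩, _, ⟨b, hb, rfl⟩, ?_⟩
    simp_rw [hsum ha hb, hab]

-- The scaled digit set is an image because on `Set ℕ`, `k • A` means `A + ⋯ + A`.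
theorem linCantor_image_mul (n k : ℕ) (A : Set ℕ) :
    linCantor n ((k * ·) '' A) = (k : ℝ) • linCantor n A := by
  have hmul : ∀ a : ℕ → ℕ, (k : ℝ) * ∑' i, (a i : ℝ) / n ^ (i + 1) =
      ∑' i, ((k * a i : ℕ) : ℝ) / n ^ (i + 1) := fun a => by
    rw [← tsum_mul_left]
    push_cast
    simp_rw [mul_div_assoc]
  ext x
  constructor
  · rintro ⟨c, hc, rfl⟩
    choose a ha hac using hc
    refine ⟨_, ⟨a, ha, rfl⟩, ?_⟩
    simp_rw [smul_eq_mul, hmul, hac]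
  · rintro ⟨_, ⟨a, ha, rfl⟩, rfl⟩
    exact ⟨(k * a ·), fun i => Set.mem_image_of_mem _ (ha i), hmul a⟩

/-- The middle-third Cantor set `C` satisfies `C + C = [0,2]`. -/
theorem cantor_add_cantor_eq_Icc :
    linCantor 3 {0, 2} + linCantor 3 {0, 2} = Set.Icc (0 : ℝ) 2 := by
  have hdigits : ({0, 2} + {0, 2} : Set ℕ) = (2 * ·) '' Set.Iio 3 := by
    ext d
    simp only [Set.mem_add, Set.mem_image, Set.mem_insert_iff, Set.mem_singleton_iff, Set.mem_Iio]
    constructor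
    · rintro ⟨a, ha, b, hb, rfl⟩
      exact ⟨(a + b) / 2, by omega, by omega⟩
    · rintro ⟨e, he, rfl⟩
      interval_cases e <;> simp
  calc linCantor 3 {0, 2} + linCantor 3 {0, 2}
      = linCantor 3 ({0, 2} + {0, 2}) := linCantor_add (by norm_num) (by simp) (by simp)
    _ = (2 : ℝ) • Set.Icc 0 1 := by
      rw [hdigits, linCantor_image_mul, linCantor_Iio_eq_Icc (by norm_num), Nat.cast_ofNat]
    _ = Set.Icc 0 2 := by rw [LinearOrderedField.smul_Icc zero_lt_two]; norm_num
end

section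
/- Let C be the middle-third Cantor set. For Lebesgue-almost every z ∈ [0,2], the set of pairs (x,y) ∈ C × C with x + y = z has the cardinality of the continuum. -/
open Pointwise

/-!
Expand `z / 2 = ∑ dᵢ 3^{-(i+1)}` in base 3. Digits `0` and `2` of `z / 2` can be realised as
`0 + 0` and `2 + 2` by ternary digits of `x, y ∈ C` with `x + y = z`, and each digit `1` either as
`0 + 2` or as `2 + 0`. So if `z / 2` has an expansion with infinitely many digits `1`, there are
`2 ^ ℵ₀` such pairs. The remaining `z / 2` lie in countably many similar copies of `C`, and `C`
is null since `C = C / 3 ∪ (2 + C) / 3` bounds its measure by two thirds of itself.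
-/

open MeasureTheory Real

theorem Real.volume_image_add_div (b a : ℝ) (s : Set ℝ) :
    volume ((fun x ↦ (b + x) / a) '' s) = ENNReal.ofReal |a⁻¹| * volume s := by
  have : (fun x ↦ (b + x) / a) '' s = a⁻¹ • (b +ᵥ s) := by
    rw [← Set.image_vadd, ← Set.image_smul, Set.image_image]
    simp only [vadd_eq_add, smul_eq_mul, div_eq_inv_mul]
  rw [this, Measure.addHaar_smul, measure_vadd, Module.finrank_self, pow_one]

theorem volume_cantorSet : volume cantorSet = 0 := by
  have hfin : volume cantorSet ≠ ⊤ :=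
    ((measure_mono cantorSet_subset_unitInterval).trans_lt (by simp)).ne
  have hle : volume cantorSet ≤ 2 / 3 * volume cantorSet := by
    conv_lhs => rw [cantorSet_eq_union_halves]
    calc _ ≤ volume ((fun x ↦ (0 + x) / 3) '' cantorSet)
          + volume ((fun x ↦ (2 + x) / 3) '' cantorSet) := by
          simpa only [zero_add] using measure_union_le _ _
      _ = 2 / 3 * volume cantorSet := by
          rw [Real.volume_image_add_div, Real.volume_image_add_div, ← add_mul]
          congr 1
          rw [abs_of_pos (by norm_num), ← ENNReal.ofReal_add (by norm_num) (by norm_num),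
            show (3 : ℝ)⁻¹ + 3⁻¹ = 2 / 3 by norm_num, ENNReal.ofReal_div_of_pos (by norm_num)]
          norm_num
  by_contra h0
  have := ENNReal.mul_lt_mul_right h0 hfin (show (2 / 3 : ENNReal) < 1 by
    rw [ENNReal.div_lt_iff (by norm_num) (by norm_num)]; norm_num)
  rw [mul_one, mul_comm] at this
  exact hle.not_gt this

theorem linCantor_three_eq_cantorSet : linCantor 3 {0, 2} = cantorSet := by
  ext x
  rw [cantorSet_eq_zero_two_ofDigits]
  constructor
  · rintro ⟨a, ha, rfl⟩
    have ha' (i : ℕ) : a i < 3 := by grind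
    refine ⟨fun i ↦ ⟨a i, ha' i⟩, fun i ↦ by grind, ?_⟩
    simp [ofDigits, ofDigitsTerm, div_eq_mul_inv]
  · rintro ⟨d, hd, rfl⟩
    refine ⟨fun i ↦ d i, fun i ↦ ?_, by simp [ofDigits, ofDigitsTerm, div_eq_mul_inv]⟩
    grind

theorem volume_setOf_ofDigits_shift_mem {b : ℕ} {N : Set ℝ} (hN : volume N = 0) (k : ℕ) :
    volume {x | ∃ d : ℕ → Fin b, ofDigits (fun i ↦ d (i + k)) ∈ N ∧ ofDigits d = x} = 0 := by
  refine measure_mono_null (t := ⋃ p : Fin k → Fin b,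
    (∑ i : Fin k, ((p i : ℕ) : ℝ) * ((b : ℝ) ^ ((i : ℕ) + 1))⁻¹) +ᵥ ((b : ℝ) ^ k)⁻¹ • N) ?_
    (measure_iUnion_null fun p ↦ by rw [measure_vadd, Measure.addHaar_smul, hN, mul_zero])
  rintro x ⟨d, hdN, rfl⟩
  refine Set.mem_iUnion.2 ⟨fun i ↦ d i, _, Set.smul_mem_smul_set hdN, ?_⟩
  rw [ofDigits_eq_sum_add_ofDigits d k, ← Fin.sum_univ_eq_sum_range]
  rfl

theorem volume_setOf_ofDigits_finite_ones :
    volume {x | ∃ d : ℕ → Fin 3, {i | d i = 1}.Finite ∧ ofDigits d = x} = 0 := by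
  refine measure_mono_null ?_ (measure_iUnion_null fun k ↦
    volume_setOf_ofDigits_shift_mem (b := 3) volume_cantorSet k)
  rintro x ⟨d, hfin, rfl⟩
  obtain ⟨k, hk⟩ := hfin.bddAbove
  refine Set.mem_iUnion.2 ⟨k + 1, d, ofDigits_zero_two_sequence_mem_cantorSet fun i hi ↦ ?_, rfl⟩
  have := hk hi
  omega

theorem Real.ofDigits_add_ofDigits {b : ℕ} {x y z : ℕ → Fin b} {c : ℝ}
    (h : ∀ i, (x i : ℝ) + y i = c * z i) : ofDigits x + ofDigits y = c * ofDigits z := by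
  rw [ofDigits, ofDigits, ofDigits, ← summable_ofDigitsTerm.tsum_add summable_ofDigitsTerm,
    ← tsum_mul_left]
  congr 1
  ext i
  simp only [ofDigitsTerm, ← add_mul, h, mul_assoc]

def splitOnes (d : ℕ → Fin 3) (T : {i | d i = 1} → Bool) (i : ℕ) : Fin 3 :=
  if h : d i = 1 then cond (T ⟨i, h⟩) 2 0 else d i

theorem splitOnes_ne_one (d : ℕ → Fin 3) (T : {i | d i = 1} → Bool) (i : ℕ) :
    splitOnes d T i ≠ 1 := by
  unfold splitOnes
  split_ifs with h
  · cases T ⟨i, h⟩ <;> decide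
  · exact h

theorem splitOnes_add_splitOnes_not (d : ℕ → Fin 3) (T : {i | d i = 1} → Bool) (i : ℕ) :
    (splitOnes d T i : ℝ) + splitOnes d (fun j ↦ !T j) i = 2 * d i := by
  unfold splitOnes
  split_ifs with h
  · cases hT : T ⟨i, h⟩ <;> simp [h, hT]
  · ring

theorem splitOnes_injective (d : ℕ → Fin 3) : Function.Injective (splitOnes d) := by
  intro T T' hTT'
  ext ⟨i, h : d i = 1⟩
  have := congrFun hTT' i
  unfold splitOnes at this
  rw [dif_pos h, dif_pos h] at this
  cases hT : T ⟨i, h⟩ <;> cases hT' : T' ⟨i, h⟩ <;> simp [hT, hT'] at this ⊢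

open Cardinal in
theorem mk_cantorSet_pairs_add_eq_continuum {d : ℕ → Fin 3} (hd : {i | d i = 1}.Infinite) :
    #{p : ℝ × ℝ | p.1 ∈ cantorSet ∧ p.2 ∈ cantorSet ∧ p.1 + p.2 = 2 * ofDigits d} = 𝔠 := by
  have : Infinite {i | d i = 1} := hd.to_subtype
  let pair (T : {i | d i = 1} → Bool) :
      {p : ℝ × ℝ | p.1 ∈ cantorSet ∧ p.2 ∈ cantorSet ∧ p.1 + p.2 = 2 * ofDigits d} :=
    ⟨(ofDigits (splitOnes d T), ofDigits (splitOnes d fun j ↦ !T j)),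
      ofDigits_zero_two_sequence_mem_cantorSet (splitOnes_ne_one d T),
      ofDigits_zero_two_sequence_mem_cantorSet (splitOnes_ne_one d _),
      ofDigits_add_ofDigits (splitOnes_add_splitOnes_not d T)⟩
  have hpair : Function.Injective pair := fun T T' h ↦ splitOnes_injective d <|
    ofDigits_zero_two_sequence_unique (splitOnes_ne_one d T) (splitOnes_ne_one d T')
      (congrArg (fun p ↦ p.1.1) h)
  refine le_antisymm ((mk_set_le _).trans ?_) ?_
  · rw [mk_prod, lift_id, mk_real, continuum_mul_self]
  · calc 𝔠 = #({i | d i = 1} → Bool) := by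
          rw [← power_def, mk_bool, mk_eq_aleph0, two_power_aleph0]
      _ ≤ _ := mk_le_of_injective hpair

/-- For a.e. `z ∈ [0,2]`, the set of pairs `(x,y) ∈ C × C` with `x + y = z` has
cardinality of the continuum, where `C` is the middle-third Cantor set. -/
theorem ae_continuum_representations :
    ∀ᵐ z ∂(MeasureTheory.volume.restrict (Set.Icc (0 : ℝ) 2)),
      Cardinal.mk {p : ℝ × ℝ | p.1 ∈ linCantor 3 {0, 2} ∧ p.2 ∈ linCantor 3 {0, 2} ∧
        p.1 + p.2 = z} = Cardinal.continuum := by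
  have hnull : volume ((2 : ℝ) •
      {x | ∃ d : ℕ → Fin 3, {i | d i = 1}.Finite ∧ ofDigits d = x}) = 0 := by
    rw [Measure.addHaar_smul, volume_setOf_ofDigits_finite_ones, mul_zero]
  rw [linCantor_three_eq_cantorSet, ae_restrict_iff' measurableSet_Icc]
  filter_upwards [measure_eq_zero_iff_ae_notMem.1 hnull] with z hz ⟨hz0, hz2⟩
  obtain ⟨d, -, hd⟩ := ofDigits_SurjOn (b := 3) (by norm_num)
    (show z / 2 ∈ Set.Icc 0 1 from ⟨by linarith, by linarith⟩)
  have hinf : {i | d i = 1}.Infinite := fun hfin ↦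
    hz ⟨z / 2, ⟨d, hfin, hd⟩, by simp only [smul_eq_mul]; ring⟩
  simpa only [hd, mul_div_cancel₀ z two_ne_zero] using mk_cantorSet_pairs_add_eq_continuum hinf
end

section
/- Let C be the middle-third Cantor set and let U = {z ∈ [0,2] : there is a unique pair (x,y) ∈ C × C with x ≤ y and x + y = z}. Then U has Hausdorff dimension log 2 / log 3. -/
/-!
Write the points of the Cantor set `C` as `cantorPoint ω`, where `ω : ℕ → Bool` codes the
ternary digits `0, 2`. If `z = x + y` is the only representation of `z`, the digit sequences of
`x` and `y` differ in at most one place, since exchanging one of several differing digits gives a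
new pair with the same sum. Hence `z = 2 c + τ` with `c ∈ C` and `τ` in the countable set
`{0} ∪ {2 / 3 ^ (m + 1)}`, so `dim U ≤ dim C`. Conversely, if `ω` has infinitely many zeros and
infinitely many ones, the expansion of `cantorPoint ω` is its only ternary expansion; as
`(x + y) / 2` has the ternary digits `(aᵢ + bᵢ) / 2`, `z = 2 cantorPoint ω` forces
`x = y = cantorPoint ω`. This puts all of `2 C` but a countable set into `U`, so `dim C ≤ dim U`.
Finally `dim C = log 2 / log 3`: `C` is covered by `2 ^ n` sets of diameter `3 ^ (-n)`, and the
Cantor function maps `C` onto `[0, 1]` and is Hölder of exponent `log 2 / log 3`.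
-/

open Pointwise

open MeasureTheory

open Filter Function Set Metric
open scoped ENNReal NNReal

namespace Real

variable {b : ℕ}

theorem ofDigits_eq_mul_add_mul {x y z : ℕ → Fin b} (p q : ℝ)
    (h : ∀ i, (z i : ℝ) = p * x i + q * y i) :
    ofDigits z = p * ofDigits x + q * ofDigits y := by
  simp only [ofDigits, ← tsum_mul_left]
  rw [← summable_ofDigitsTerm.mul_left p |>.tsum_add (summable_ofDigitsTerm.mul_left q)]
  congr 1 with i
  simp only [ofDigitsTerm, h]
  ring

theorem ofDigits_update (x : ℕ → Fin b) (m : ℕ) (d : Fin b) :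
    ofDigits (update x m d) = ofDigits x + ((d : ℝ) - x m) * ((b : ℝ) ^ (m + 1))⁻¹ := by
  simp only [ofDigits]
  rw [summable_ofDigitsTerm.tsum_eq_add_tsum_ite m, summable_ofDigitsTerm.tsum_eq_add_tsum_ite m]
  have hrest : ∀ i, (if i = m then 0 else ofDigitsTerm (update x m d) i) =
      if i = m then 0 else ofDigitsTerm x i := fun i => by
    split_ifs with hi
    · rfl
    · simp [ofDigitsTerm, update_of_ne hi]
  rw [tsum_congr hrest]
  simp only [ofDigitsTerm, update_self]
  ring

theorem ofDigits_rev (hb : 1 < b) (x : ℕ → Fin b) :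
    ofDigits (fun i => (x i).rev) = 1 - ofDigits x := by
  have hsum := ofDigits_eq_mul_add_mul (x := fun i => (x i).rev) (y := x)
    (z := fun _ => ⟨b - 1, Nat.sub_one_lt_of_lt hb⟩) 1 1 fun i => by
      have := (x i).isLt
      simp only [Fin.val_rev, one_mul, Nat.cast_sub (by omega : 1 ≤ b),
        Nat.cast_sub (by omega : (x i : ℕ) + 1 ≤ b)]
      push_cast
      ring
  rw [ofDigits_const_last_eq_one' hb] at hsum
  linarith

theorem eq_zero_of_ofDigits_eq_zero {x : ℕ → Fin b} (h : ofDigits x = 0) (i : ℕ) :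
    (x i : ℕ) = 0 := by
  have hsum : HasSum (ofDigitsTerm x) 0 := h ▸ (summable_ofDigitsTerm (digits := x)).hasSum
  have := congrFun ((hasSum_zero_iff_of_nonneg fun _ => ofDigitsTerm_nonneg).1 hsum) i
  have hb : (b : ℝ) ≠ 0 := by exact_mod_cast (x i).pos.ne'
  simpa [ofDigitsTerm, hb] using this

theorem eq_last_of_ofDigits_eq_one (hb : 1 < b) {x : ℕ → Fin b} (h : ofDigits x = 1) (i : ℕ) :
    (x i : ℕ) = b - 1 := by
  have := eq_zero_of_ofDigits_eq_zero (x := fun i => (x i).rev)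
    (by rw [ofDigits_rev hb, h, sub_self]) i
  have := (x i).isLt
  simp only [Fin.val_rev] at *
  omega

theorem ofDigits_sub_ofDigits_of_eqOn {x y : ℕ → Fin b} {n : ℕ} (h : ∀ i < n, x i = y i) :
    ofDigits x - ofDigits y = ((x n : ℝ) - y n + ofDigits (fun i => x (i + (n + 1))) -
      ofDigits (fun i => y (i + (n + 1)))) * ((b : ℝ) ^ (n + 1))⁻¹ := by
  have hpre : ∑ i ∈ Finset.range n, ofDigitsTerm x i = ∑ i ∈ Finset.range n, ofDigitsTerm y i :=
    Finset.sum_congr rfl fun i hi => by rw [ofDigitsTerm, h i (Finset.mem_range.1 hi)]; rfl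
  rw [ofDigits_eq_sum_add_ofDigits x (n + 1), ofDigits_eq_sum_add_ofDigits y (n + 1),
    Finset.sum_range_succ, Finset.sum_range_succ, hpre]
  simp only [ofDigitsTerm]
  ring

theorem inv_pow_le_ofDigits_sub_ofDigits {x y : ℕ → Fin b} {n : ℕ} (h : ∀ i < n, x i = y i)
    (hn : (y n : ℕ) + 2 ≤ x n) : ((b : ℝ) ^ (n + 1))⁻¹ ≤ ofDigits x - ofDigits y := by
  rw [ofDigits_sub_ofDigits_of_eqOn h]
  have hn' : (y n : ℝ) + 2 ≤ x n := by exact_mod_cast hn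
  have := ofDigits_nonneg (fun i => x (i + (n + 1)))
  have := ofDigits_le_one (fun i => y (i + (n + 1)))
  refine le_mul_of_one_le_left (by positivity) ?_
  linarith

theorem eq_of_ofDigits_eq (hb : 1 < b) {x y : ℕ → Fin b} (h : ofDigits x = ofDigits y)
    (h0 : ∃ᶠ n in atTop, (y n : ℕ) ≠ 0) (hlast : ∃ᶠ n in atTop, (y n : ℕ) ≠ b - 1) : x = y := by
  classical
  by_contra hne
  have hex : ∃ n, x n ≠ y n := ne_iff.1 hne
  set n := Nat.find hex
  have hpre : ∀ i < n, x i = y i := fun i hi => not_not.1 (Nat.find_min hex hi)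
  have hdiff := ofDigits_sub_ofDigits_of_eqOn hpre
  rw [h, sub_self, zero_eq_mul] at hdiff
  replace hdiff := hdiff.resolve_right (by have := (x 0).pos; positivity)
  set Tx := ofDigits (fun i => x (i + (n + 1)))
  set Ty := ofDigits (fun i => y (i + (n + 1)))
  have := ofDigits_nonneg (fun i => x (i + (n + 1)))
  have := ofDigits_le_one (fun i => x (i + (n + 1)))
  have := ofDigits_nonneg (fun i => y (i + (n + 1)))
  have := ofDigits_le_one (fun i => y (i + (n + 1)))
  have tail_of_frequently : ∀ {p : ℕ → Prop}, (∃ᶠ k in atTop, p k) →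
      ∃ i, p (i + (n + 1)) := fun hp => by
    obtain ⟨k, hk, hnk⟩ := (hp.and_eventually (eventually_ge_atTop (n + 1))).exists
    exact ⟨k - (n + 1), by rwa [Nat.sub_add_cancel hnk]⟩
  -- at the first differing digit the two digits differ by one and the tails have values `0` and `1`
  rcases lt_trichotomy (x n : ℕ) (y n) with hlt | heq | hgt
  · have hlt' : (x n : ℝ) + 1 ≤ y n := by exact_mod_cast hlt
    obtain ⟨i, hi⟩ := tail_of_frequently h0
    exact hi (eq_zero_of_ofDigits_eq_zero (show Ty = 0 by linarith) i)
  · exact Nat.find_spec hex (Fin.ext heq)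
  · have hgt' : (y n : ℝ) + 1 ≤ x n := by exact_mod_cast hgt
    obtain ⟨i, hi⟩ := tail_of_frequently hlast
    exact hi (eq_last_of_ofDigits_eq_one hb (show Ty = 1 by linarith) i)

end Real

theorem hausdorffMeasure_eq_zero_of_forall_cover {X : Type*} [EMetricSpace X] [MeasurableSpace X]
    [BorelSpace X] {ι : ℕ → Type*} [∀ n, Fintype (ι n)] {s : Set X} {d : ℝ} (hd : 0 ≤ d)
    {k : ℕ} {ρ : ℝ≥0∞} (hρ : ρ < 1) (hkρ : k * ρ ^ d < 1) (t : ∀ n, ι n → Set X)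
    (hcard : ∀ n, Fintype.card (ι n) ≤ k ^ n) (hdiam : ∀ n i, ediam (t n i) ≤ ρ ^ n)
    (hcover : ∀ n, s ⊆ ⋃ i, t n i) : μH[d] s = 0 := by
  have hsum : ∀ n, ∑ i, ediam (t n i) ^ d ≤ (k * ρ ^ d) ^ n := fun n =>
    calc ∑ i, ediam (t n i) ^ d ≤ ∑ _i : ι n, (ρ ^ n) ^ d :=
          Finset.sum_le_sum fun i _ => ENNReal.rpow_le_rpow (hdiam n i) hd
      _ = Fintype.card (ι n) * (ρ ^ d) ^ n := by
          rw [Finset.sum_const, nsmul_eq_mul, Finset.card_univ, ← ENNReal.rpow_natCast_mul,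
            mul_comm (n : ℝ), ENNReal.rpow_mul_natCast]
      _ ≤ (k * ρ ^ d) ^ n := by
          rw [mul_pow]
          gcongr
          exact_mod_cast hcard n
  refine le_antisymm ?_ zero_le
  calc μH[d] s ≤ liminf (fun n => ∑ i, ediam (t n i) ^ d) atTop :=
        Measure.hausdorffMeasure_le_liminf_sum d s (fun n => ρ ^ n)
          (ENNReal.tendsto_pow_atTop_nhds_zero_of_lt_one hρ) t (.of_forall hdiam)
          (.of_forall hcover)
    _ ≤ liminf (fun n => (k * ρ ^ d) ^ n) atTop := liminf_le_liminf (.of_forall hsum)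
    _ = 0 := (ENNReal.tendsto_pow_atTop_nhds_zero_of_lt_one hkρ).liminf_eq

open Real

noncomputable def cantorPoint (ω : ℕ → Bool) : ℝ := ofDigits fun i => (cond (ω i) 2 0 : Fin 3)

noncomputable def binaryPoint (ω : ℕ → Bool) : ℝ := ofDigits fun i => (cond (ω i) 1 0 : Fin 2)

lemma linCantor_eq_range_cantorPoint : linCantor 3 {0, 2} = range cantorPoint := by
  ext x
  constructor
  · rintro ⟨a, ha, rfl⟩
    refine ⟨fun i => decide (a i = 2), tsum_congr fun i => ?_⟩
    obtain h | h : a i = 0 ∨ a i = 2 := ha i <;> simp [h, ofDigitsTerm, div_eq_mul_inv]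
  · rintro ⟨ω, rfl⟩
    refine ⟨fun i => cond (ω i) 2 0, fun i => ?_, tsum_congr fun i => ?_⟩ <;>
      cases h : ω i <;> simp [h, ofDigitsTerm, div_eq_mul_inv]

lemma cantorPoint_injective : Injective cantorPoint := fun α β h => by
  have := ofDigits_zero_two_sequence_unique (fun i => by cases α i <;> decide)
    (fun i => by cases β i <;> decide) h
  funext i
  have := congrFun this i
  revert this
  cases α i <;> cases β i <;> decide

lemma cantorPoint_mem_Icc (ω : ℕ → Bool) : cantorPoint ω ∈ Icc 0 1 :=
  ⟨ofDigits_nonneg _, ofDigits_le_one _⟩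

lemma cantorPoint_update (ω : ℕ → Bool) (m : ℕ) (c : Bool) :
    cantorPoint (update ω m c) =
      cantorPoint ω + 2 * ((c.toNat : ℝ) - (ω m).toNat) * ((3 : ℝ) ^ (m + 1))⁻¹ := by
  have := ofDigits_update (fun i => (cond (ω i) 2 0 : Fin 3)) m (cond c 2 0)
  rw [← funext fun i => apply_update (fun _ b => (cond b 2 0 : Fin 3)) ω m c i] at this
  rw [cantorPoint, cantorPoint, this]
  cases c <;> cases ω m <;> norm_num

lemma Icc_subset_range_binaryPoint : Icc 0 1 ⊆ range binaryPoint := fun y hy => by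
  obtain ⟨d, -, rfl⟩ := ofDigits_SurjOn one_lt_two hy
  refine ⟨fun i => decide (d i = 1), congrArg ofDigits (funext fun i => ?_)⟩
  show cond (decide (d i = 1)) 1 0 = d i
  generalize d i = e
  fin_cases e <;> rfl

lemma inv_three_pow_rpow_logb (n : ℕ) : (((3 : ℝ) ^ n)⁻¹) ^ logb 3 2 = ((2 : ℝ) ^ n)⁻¹ := by
  rw [inv_rpow (by positivity), ← rpow_pow_comm (by norm_num),
    rpow_logb (by norm_num) (by norm_num) (by norm_num)]

lemma dist_binaryPoint_le_of_eqOn {α β : ℕ → Bool} {n : ℕ} (hpre : ∀ i < n, α i = β i)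
    (hα : α n = true) (hβ : β n = false) :
    dist (binaryPoint α) (binaryPoint β) ≤ 2 * dist (cantorPoint α) (cantorPoint β) ^ logb 3 2 := by
  have hbin : dist (binaryPoint α) (binaryPoint β) ≤ ((2 : ℝ) ^ n)⁻¹ := by
    rw [dist_eq, binaryPoint, binaryPoint]
    simpa using abs_ofDigits_sub_ofDigits_le (b := 2) fun i hi => by simp [hpre i hi]
  have hcantor : ((3 : ℝ) ^ (n + 1))⁻¹ ≤ dist (cantorPoint α) (cantorPoint β) := by
    rw [dist_eq, cantorPoint, cantorPoint]
    refine le_trans ?_ (le_abs_self _)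
    simpa using inv_pow_le_ofDigits_sub_ofDigits (b := 3) (n := n)
      (fun i hi => by simp [hpre i hi]) (by simp [hα, hβ])
  calc dist (binaryPoint α) (binaryPoint β) ≤ ((2 : ℝ) ^ n)⁻¹ := hbin
    _ = 2 * (((3 : ℝ) ^ (n + 1))⁻¹) ^ logb 3 2 := by
      rw [inv_three_pow_rpow_logb, pow_succ]
      field_simp
    _ ≤ 2 * dist (cantorPoint α) (cantorPoint β) ^ logb 3 2 := by
      gcongr
      exact logb_nonneg (by norm_num) (by norm_num)

lemma dist_binaryPoint_le (α β : ℕ → Bool) :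
    dist (binaryPoint α) (binaryPoint β) ≤ 2 * dist (cantorPoint α) (cantorPoint β) ^ logb 3 2 := by
  classical
  rcases eq_or_ne α β with rfl | hne
  · simp only [dist_self]
    positivity
  have hex : ∃ n, α n ≠ β n := ne_iff.1 hne
  have hpre : ∀ i < Nat.find hex, α i = β i := fun i hi => not_not.1 (Nat.find_min hex hi)
  have hne := Nat.find_spec hex
  by_cases hα : α (Nat.find hex) = true
  · exact dist_binaryPoint_le_of_eqOn hpre hα (by simpa [hα] using hne.symm)
  · rw [dist_comm, dist_comm (cantorPoint α)]
    exact dist_binaryPoint_le_of_eqOn (fun i hi => (hpre i hi).symm) (by simpa [hα] using hne)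
      (by simpa using hα)

lemma ediam_cantorPoint_image_cylinder_le (n : ℕ) (w : Fin n → Bool) :
    ediam (cantorPoint '' {ω | ∀ i : Fin n, ω i = w i}) ≤ ENNReal.ofReal 3⁻¹ ^ n := by
  refine Metric.ediam_le ?_
  rintro _ ⟨α, hα, rfl⟩ _ ⟨β, hβ, rfl⟩
  rw [edist_dist, ← ENNReal.ofReal_pow (by norm_num), inv_pow]
  refine ENNReal.ofReal_le_ofReal ?_
  rw [dist_eq, cantorPoint, cantorPoint]
  simpa using abs_ofDigits_sub_ofDigits_le (b := 3) (n := n) fun i hi => by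
    simp [(hα ⟨i, hi⟩).trans (hβ ⟨i, hi⟩).symm]

lemma hausdorffMeasure_range_cantorPoint {d : ℝ} (hd : logb 3 2 < d) :
    μH[d] (range cantorPoint) = 0 := by
  have hs : 0 ≤ logb 3 2 := logb_nonneg (by norm_num) (by norm_num)
  have hkρ : (2 : ℕ) * (3 : ℝ)⁻¹ ^ d < 1 := by
    have hlt := rpow_lt_rpow_of_exponent_gt (x := 3⁻¹) (by norm_num) (by norm_num) hd
    have h := inv_three_pow_rpow_logb 1
    rw [pow_one, pow_one] at h
    push_cast
    linarith
  refine hausdorffMeasure_eq_zero_of_forall_cover (hs.trans hd.le) (k := 2)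
    (ENNReal.ofReal_lt_one.2 (by norm_num)) ?_ (fun n (w : Fin n → Bool) =>
      cantorPoint '' {ω | ∀ i : Fin n, ω i = w i}) (fun n => by simp)
    ediam_cantorPoint_image_cylinder_le fun n => ?_
  · rw [ENNReal.ofReal_rpow_of_nonneg (by norm_num) (hs.trans hd.le), ← ENNReal.ofReal_natCast,
      ← ENNReal.ofReal_mul (by positivity), ENNReal.ofReal_lt_one]
    exact hkρ
  · rintro _ ⟨ω, rfl⟩
    exact mem_iUnion.2 ⟨fun i => ω i, mem_image_of_mem _ fun i => rfl⟩

lemma dimH_range_cantorPoint_le : dimH (range cantorPoint) ≤ ENNReal.ofReal (logb 3 2) :=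
  dimH_le fun d hd => by
    by_contra! h
    rw [hausdorffMeasure_range_cantorPoint
      ((ENNReal.ofReal_lt_coe_iff (logb_nonneg (by norm_num) (by norm_num))).1 h)] at hd
    exact ENNReal.zero_ne_top hd

lemma le_dimH_range_cantorPoint : ENNReal.ofReal (logb 3 2) ≤ dimH (range cantorPoint) := by
  set r : ℝ≥0 := (logb 3 2).toNNReal
  have hr : 0 < r := toNNReal_pos.2 (logb_pos (by norm_num) (by norm_num))
  -- the Cantor function on `C`
  set F : ℝ → ℝ := binaryPoint ∘ invFun cantorPoint
  have hF : HolderOnWith 2 r F (range cantorPoint) := by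
    rintro _ ⟨α, rfl⟩ _ ⟨β, rfl⟩
    simp only [F, comp_apply, leftInverse_invFun cantorPoint_injective _, edist_dist]
    rw [coe_toNNReal _ (logb_nonneg (by norm_num) (by norm_num)),
      ENNReal.ofReal_rpow_of_nonneg dist_nonneg (logb_nonneg (by norm_num) (by norm_num)),
      ENNReal.coe_ofNat, ← ENNReal.ofReal_ofNat 2, ← ENNReal.ofReal_mul zero_le_two]
    exact ENNReal.ofReal_le_ofReal (dist_binaryPoint_le α β)
  have hsurj : Icc 0 1 ⊆ F '' range cantorPoint := fun y hy => by
    obtain ⟨ω, rfl⟩ := Icc_subset_range_binaryPoint hy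
    exact ⟨cantorPoint ω, mem_range_self ω, by simp [F, leftInverse_invFun cantorPoint_injective _]⟩
  have hIcc : dimH (Icc (0 : ℝ) 1) = 1 := by
    rw [Real.dimH_of_nonempty_interior (by simp), Module.finrank_self, Nat.cast_one]
  have := (hIcc ▸ dimH_mono hsurj).trans (hF.dimH_image_le hr)
  rw [ENNReal.le_div_iff_mul_le (.inl (by simpa using hr.ne')) (.inl ENNReal.coe_ne_top),
    one_mul] at this
  exact this

lemma dimH_range_cantorPoint : dimH (range cantorPoint) = ENNReal.ofReal (logb 3 2) :=
  le_antisymm dimH_range_cantorPoint_le le_dimH_range_cantorPoint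

def uniqueSums {α : Type*} [LinearOrder α] [Add α] (C : Set α) : Set α :=
  {z | ∃! p : α × α, p.1 ∈ C ∧ p.2 ∈ C ∧ p.1 ≤ p.2 ∧ p.1 + p.2 = z}

lemma eq_or_swap_of_mem_uniqueSums {α : Type*} [LinearOrder α] [AddCommMagma α] {C : Set α}
    {z x y x' y' : α} (hz : z ∈ uniqueSums C) (hx : x ∈ C) (hy : y ∈ C) (hxy : x + y = z)
    (hx' : x' ∈ C) (hy' : y' ∈ C) (hxy' : x' + y' = z) :
    x' = x ∧ y' = y ∨ x' = y ∧ y' = x := by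
  obtain ⟨p, -, hp⟩ := hz
  have key : ∀ u v, u ∈ C → v ∈ C → u + v = z → s(u, v) = s(p.1, p.2) := fun u v hu hv huv => by
    rcases le_total u v with h | h
    · rw [← hp (u, v) ⟨hu, hv, h, huv⟩]
    · rw [Sym2.eq_swap, ← hp (v, u) ⟨hv, hu, h, add_comm v u ▸ huv⟩]
  exact Sym2.eq_iff.1 ((key x' y' hx' hy' hxy').trans (key x y hx hy hxy).symm)

lemma eq_of_ne_of_ne_of_mem_uniqueSums {α β : ℕ → Bool}
    (hz : cantorPoint α + cantorPoint β ∈ uniqueSums (range cantorPoint)) {i j : ℕ}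
    (hi : α i ≠ β i) (hj : α j ≠ β j) : i = j := by
  by_contra hij
  have hswap : cantorPoint (update α i (β i)) + cantorPoint (update β i (α i)) =
      cantorPoint α + cantorPoint β := by
    rw [cantorPoint_update, cantorPoint_update]
    ring
  rcases eq_or_swap_of_mem_uniqueSums hz (mem_range_self α) (mem_range_self β) rfl
    (mem_range_self _) (mem_range_self _) hswap with ⟨h, -⟩ | ⟨h, -⟩
  · exact hi (by simpa using (congrFun (cantorPoint_injective h) i).symm)
  · exact hj (by simpa [update_of_ne (Ne.symm hij)] using congrFun (cantorPoint_injective h) j)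

lemma cantorPoint_add_cantorPoint_of_eqOn_compl {α β : ℕ → Bool} {m : ℕ}
    (h : ∀ k ≠ m, α k = β k) (hα : α m = true) (hβ : β m = false) :
    cantorPoint α + cantorPoint β = 2 * cantorPoint β + 2 * ((3 : ℝ) ^ (m + 1))⁻¹ := by
  have hαβ : α = update β m true := funext fun k => by
    rcases eq_or_ne k m with rfl | hk
    · simp [hα]
    · simp [update_of_ne hk, h k hk]
  rw [hαβ, cantorPoint_update, hβ]
  simp only [Bool.toNat_true, Bool.toNat_false]
  push_cast
  ring

lemma exists_eq_two_mul_add_of_mem_uniqueSums {z : ℝ} (hz : z ∈ uniqueSums (range cantorPoint)) :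
    ∃ τ ∈ insert 0 (range fun m : ℕ => 2 * ((3 : ℝ) ^ (m + 1))⁻¹),
      ∃ ω, z = 2 * cantorPoint ω + τ := by
  obtain ⟨p, ⟨⟨α, hα⟩, ⟨β, hβ⟩, -, rfl⟩, -⟩ := id hz
  rw [← hα, ← hβ] at hz ⊢
  by_cases hαβ : α = β
  · exact ⟨0, mem_insert _ _, α, by rw [hαβ]; ring⟩
  obtain ⟨m, hm⟩ := ne_iff.1 hαβ
  have honly : ∀ k ≠ m, α k = β k := fun k hk =>
    not_not.1 fun hne => hk (eq_of_ne_of_ne_of_mem_uniqueSums hz hne hm)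
  refine ⟨_, mem_insert_of_mem _ (mem_range_self m), ?_⟩
  cases hαm : α m
  · refine ⟨α, ?_⟩
    rw [add_comm]
    exact cantorPoint_add_cantorPoint_of_eqOn_compl (fun k hk => (honly k hk).symm)
      (by simpa [hαm] using hm.symm) hαm
  · exact ⟨β, cantorPoint_add_cantorPoint_of_eqOn_compl honly hαm (by simpa [hαm] using hm.symm)⟩

lemma dimH_image_two_mul_add (τ : ℝ) (s : Set ℝ) :
    dimH ((fun x => 2 * x + τ) '' s) = dimH s := by
  have hdist : ∀ x y : ℝ, dist (2 * x + τ) (2 * y + τ) = 2 * dist x y := fun x y => by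
    rw [dist_eq, dist_eq, add_sub_add_right_eq_sub, ← mul_sub, abs_mul, abs_two]
  refine le_antisymm (LipschitzWith.dimH_image_le (K := 2) ?_ s)
    (AntilipschitzWith.le_dimH_image (K := 1) ?_ s)
  · exact .of_dist_le_mul fun x y => by rw [hdist]; norm_num
  · exact .of_le_mul_dist fun x y => by
      rw [hdist, NNReal.coe_one]
      linarith [dist_nonneg (x := x) (y := y)]

lemma dimH_uniqueSums_le : dimH (uniqueSums (range cantorPoint)) ≤ dimH (range cantorPoint) := by
  set T := insert 0 (range fun m : ℕ => 2 * ((3 : ℝ) ^ (m + 1))⁻¹)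
  have hcover : uniqueSums (range cantorPoint) ⊆
      ⋃ τ ∈ T, (fun x => 2 * x + τ) '' range cantorPoint := fun z hz => by
    obtain ⟨τ, hτ, ω, rfl⟩ := exists_eq_two_mul_add_of_mem_uniqueSums hz
    exact mem_biUnion hτ (mem_image_of_mem _ (mem_range_self ω))
  refine (dimH_mono hcover).trans ?_
  rw [dimH_bUnion ((countable_range _).insert 0)]
  exact iSup₂_le fun τ _ => (dimH_image_two_mul_add τ _).le

lemma eq_of_cantorPoint_add_cantorPoint_eq {α β ω : ℕ → Bool} (hω₀ : ∃ᶠ n in atTop, ω n = false)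
    (hω₁ : ∃ᶠ n in atTop, ω n = true) (h : cantorPoint α + cantorPoint β = 2 * cantorPoint ω) :
    α = ω ∧ β = ω := by
  set d : ℕ → Fin 3 := fun i => cond (α i) 1 0 + cond (β i) 1 0
  have hd : ofDigits d = 2⁻¹ * cantorPoint α + 2⁻¹ * cantorPoint β :=
    ofDigits_eq_mul_add_mul _ _ fun i => by
      simp only [d]
      cases α i <;> cases β i <;> norm_num [Fin.val_add]
  have hdω : d = fun i => cond (ω i) 2 0 := by
    refine eq_of_ofDigits_eq (by norm_num) (by rw [hd, ← mul_add, h]; ring_nf; rfl)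
      (hω₁.mono fun n hn => by simp [hn]) (hω₀.mono fun n hn => by simp [hn])
  have hdigit : ∀ i, α i = ω i ∧ β i = ω i := fun i => by
    have := congrFun hdω i
    revert this
    simp only [d]
    cases α i <;> cases β i <;> cases ω i <;> decide
  exact ⟨funext fun i => (hdigit i).1, funext fun i => (hdigit i).2⟩

lemma two_mul_cantorPoint_mem_uniqueSums {ω : ℕ → Bool} (hω₀ : ∃ᶠ n in atTop, ω n = false)
    (hω₁ : ∃ᶠ n in atTop, ω n = true) : 2 * cantorPoint ω ∈ uniqueSums (range cantorPoint) := by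
  refine ⟨(cantorPoint ω, cantorPoint ω),
    ⟨mem_range_self ω, mem_range_self ω, le_rfl, (two_mul _).symm⟩, ?_⟩
  rintro ⟨_, _⟩ ⟨⟨α, rfl⟩, ⟨β, rfl⟩, -, h⟩
  obtain ⟨rfl, rfl⟩ := eq_of_cantorPoint_add_cantorPoint_eq hω₀ hω₁ h
  rfl

lemma countable_setOf_eventually_eq (c : Bool) :
    {ω : ℕ → Bool | ∀ᶠ n in atTop, ω n = c}.Countable := by
  refine (countable_range fun s : Finset ℕ => fun n => if n ∈ s then !c else c).mono fun ω hω => ?_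
  change ∀ᶠ n in atTop, ω n = c at hω
  rw [← Nat.cofinite_eq_atTop, eventually_cofinite] at hω
  refine ⟨hω.toFinset, funext fun n => ?_⟩
  by_cases h : ω n = c <;> simp [h]
  cases c <;> simpa using h

lemma dimH_range_cantorPoint_le_dimH_uniqueSums :
    dimH (range cantorPoint) ≤ dimH (Icc 0 2 ∩ uniqueSums (range cantorPoint)) := by
  set G := {ω : ℕ → Bool | (∃ᶠ n in atTop, ω n = false) ∧ ∃ᶠ n in atTop, ω n = true}
  have hsplit : range cantorPoint ⊆ cantorPoint '' G ∪
      cantorPoint '' ({ω | ∀ᶠ n in atTop, ω n = true} ∪ {ω | ∀ᶠ n in atTop, ω n = false}) := by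
    rintro _ ⟨ω, rfl⟩
    by_cases hω : ω ∈ G
    · exact .inl (mem_image_of_mem _ hω)
    · refine .inr (mem_image_of_mem _ ?_)
      rcases not_and_or.1 hω with h | h
      · exact .inl ((not_frequently.1 h).mono fun n hn => by simpa using hn)
      · exact .inr ((not_frequently.1 h).mono fun n hn => by simpa using hn)
  have hsub :
      (fun x => 2 * x) '' (cantorPoint '' G) ⊆ Icc 0 2 ∩ uniqueSums (range cantorPoint) := by
    rintro _ ⟨_, ⟨ω, ⟨hω₀, hω₁⟩, rfl⟩, rfl⟩
    have := cantorPoint_mem_Icc ω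
    exact ⟨⟨by linarith [this.1], by linarith [this.2]⟩, two_mul_cantorPoint_mem_uniqueSums hω₀ hω₁⟩
  calc dimH (range cantorPoint) ≤ dimH (cantorPoint '' G) := by
        refine (dimH_mono hsplit).trans ?_
        rw [dimH_union, dimH_countable (((countable_setOf_eventually_eq true).union
          (countable_setOf_eventually_eq false)).image _), max_eq_left zero_le]
    _ = dimH ((fun x => 2 * x) '' (cantorPoint '' G)) := by
        simpa using (dimH_image_two_mul_add 0 (cantorPoint '' G)).symm
    _ ≤ _ := dimH_mono hsub

/-- The set of `z ∈ [0,2]` with a unique unordered representation `z = x + y`,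
`x, y` in the middle-third Cantor set, has Hausdorff dimension `log 2 / log 3`. -/
theorem dimH_uniqueness_set :
    dimH {z : ℝ | z ∈ Set.Icc (0 : ℝ) 2 ∧
      ∃! p : ℝ × ℝ, p.1 ∈ linCantor 3 {0, 2} ∧ p.2 ∈ linCantor 3 {0, 2} ∧
        p.1 ≤ p.2 ∧ p.1 + p.2 = z} = ENNReal.ofReal (Real.log 2 / Real.log 3) := by
  change dimH (Icc 0 2 ∩ uniqueSums (linCantor 3 {0, 2})) = _
  rw [log_div_log, ← dimH_range_cantorPoint, linCantor_eq_range_cantorPoint]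
  exact le_antisymm ((dimH_mono inter_subset_right).trans dimH_uniqueSums_le)
    dimH_range_cantorPoint_le_dimH_uniqueSums
end

section
/- Let n ≥ 2 and A ⊆ {0,1,...,n-1} with 0, n-1 ∈ A. If #A < √n, then C_{A,n} + C_{A,n} ≠ [0,2]. -/
/-!
Reading off the first digit, every point of `C_{A,n}` lies in `[a/n, (a+1)/n]` for some `a ∈ A`,
so `C_{A,n} + C_{A,n}` is covered by `#A²` intervals of length `2/n`. Its Lebesgue measure is
therefore at most `2 #A² / n < 2`, the length of `[0,2]`.
-/

open Pointwise

open MeasureTheory Set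

theorem Real.ofDigits_mem_Icc {b : ℕ} (d : ℕ → Fin b) :
    Real.ofDigits d ∈ Icc ((d 0 : ℝ) * (b : ℝ)⁻¹) ((d 0 : ℝ) * (b : ℝ)⁻¹ + (b : ℝ)⁻¹) := by
  have hsplit := Real.ofDigits_eq_sum_add_ofDigits d 1
  simp only [Finset.range_one, Finset.sum_singleton, Real.ofDigitsTerm, zero_add, pow_one]
    at hsplit
  have hb : (0 : ℝ) ≤ (b : ℝ)⁻¹ := by positivity
  rw [hsplit]
  exact ⟨le_add_of_nonneg_right (mul_nonneg hb (Real.ofDigits_nonneg _)),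
    add_le_add_right (mul_le_of_le_one_right hb (Real.ofDigits_le_one _)) _⟩

theorem linCantor_subset_biUnion_Icc {n : ℕ} {A : Set ℕ} (hA : ∀ a ∈ A, a < n) :
    linCantor n A ⊆ ⋃ a ∈ A, Icc ((a : ℝ) * (n : ℝ)⁻¹) ((a : ℝ) * (n : ℝ)⁻¹ + (n : ℝ)⁻¹) := by
  rintro _ ⟨d, hd, rfl⟩
  let e : ℕ → Fin n := fun i ↦ ⟨d i, hA _ (hd i)⟩
  have hdigits : ∑' i, (d i : ℝ) / n ^ (i + 1) = Real.ofDigits e := by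
    simp only [Real.ofDigits, Real.ofDigitsTerm, e, div_eq_mul_inv]
  rw [hdigits]
  exact mem_biUnion (hd 0) (Real.ofDigits_mem_Icc e)

theorem Real.volume_add_le_of_subset_biUnion_Icc {ι κ : Type*} {S T : Set ℝ}
    (I : Finset ι) (J : Finset κ) (a : ι → ℝ) (b : κ → ℝ) (r s : ℝ)
    (hS : S ⊆ ⋃ i ∈ I, Icc (a i) (a i + r)) (hT : T ⊆ ⋃ j ∈ J, Icc (b j) (b j + s)) :
    volume (S + T) ≤ (I.card * J.card : ℕ) * ENNReal.ofReal (r + s) := by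
  have hcover : S + T ⊆ ⋃ p ∈ I ×ˢ J, Icc (a p.1 + b p.2) (a p.1 + b p.2 + (r + s)) := by
    rintro _ ⟨x, hx, y, hy, rfl⟩
    obtain ⟨i, hi, hxi⟩ := mem_iUnion₂.1 (hS hx)
    obtain ⟨j, hj, hyj⟩ := mem_iUnion₂.1 (hT hy)
    refine mem_biUnion (Finset.mk_mem_product hi hj) ?_
    convert Icc_add_Icc_subset _ _ _ _ (Set.add_mem_add hxi hyj) using 2
    ring
  calc volume (S + T) ≤ ∑ p ∈ I ×ˢ J, volume (Icc (a p.1 + b p.2) (a p.1 + b p.2 + (r + s))) :=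
        (measure_mono hcover).trans (measure_biUnion_finset_le _ _)
    _ = (I.card * J.card : ℕ) * ENNReal.ofReal (r + s) := by
        simp [Real.volume_Icc, Finset.card_product]

theorem not_good_of_card_lt_sqrt_general (n : ℕ) (A : Finset ℕ)
    (hA : ∀ a ∈ A, a < n)
    (hcard : (A.card : ℝ) < Real.sqrt n) :
    linCantor n ↑A + linCantor n ↑A ≠ Set.Icc (0 : ℝ) 2 := by
  intro hgood
  have hcover := linCantor_subset_biUnion_Icc (A := (A : Set ℕ)) hA
  have hvol := Real.volume_add_le_of_subset_biUnion_Icc A A _ _ _ _ hcover hcover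
  have hn : (0 : ℝ) < n := Real.sqrt_pos.1 ((Nat.cast_nonneg _).trans_lt hcard)
  have hratio : (A.card : ℝ) * A.card / n < 1 := by
    rw [div_lt_one hn, ← sq]
    exact (Real.lt_sqrt (Nat.cast_nonneg _)).1 hcard
  rw [hgood, Real.volume_Icc, ← ENNReal.ofReal_natCast, ← ENNReal.ofReal_mul (by positivity),
    ENNReal.ofReal_le_ofReal_iff (by positivity)] at hvol
  have hsum : (A.card * A.card : ℕ) * ((n : ℝ)⁻¹ + (n : ℝ)⁻¹) = 2 * (A.card * A.card / n) := by
    push_cast; ring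
  linarith

/-- If `#A < √n` then `A` is not `n`-good. -/
theorem not_good_of_card_lt_sqrt (n : ℕ) (hn : 2 ≤ n) (A : Finset ℕ)
    (h0 : 0 ∈ A) (htop : n - 1 ∈ A) (hA : ∀ a ∈ A, a < n)
    (hcard : (A.card : ℝ) < Real.sqrt n) :
    linCantor n ↑A + linCantor n ↑A ≠ Set.Icc (0 : ℝ) 2 :=
  not_good_of_card_lt_sqrt_general n A hA hcard
end

section
/- Let n ≥ 4 and A ⊆ {0,1,...,n-1} with 0, n-1 ∈ A, A n-good, and 1 ∉ A, n-2 ∉ A. Then dim_H(U_A) ≥ log 2 / log n > 0. -/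
/-
For a binary sequence `d`, let `W d = ∑ (n - 1) d_i / n^(i+1)`, a point of `C_{A,n}` since
`0, n - 1 ∈ A`. If both digits occur infinitely often in `d`, then `W d + W d` has no other
representation `x + y`: the digit sums `s_i = a_i + a'_i` of `x + y` lie in `[0, 2n - 2]` and avoid
`1` and `2n - 3`, while every tail of the digits `2 (n - 1) d_i` has value strictly between `0` and
`2` and every tail of `s` has value in `[0, 2]`; so at each position `|s_i - 2 (n - 1) d_i| < 2`,
which forces `s_i = 2 (n - 1) d_i`, hence `a_i = a'_i = (n - 1) d_i`.

Two such points whose sequences first differ at position `j` are at distance at least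
`(n - 2) / n^(j+1)`, so `W d ↦ ∑ d_i / 2^(i+1)` is Hölder of exponent `log 2 / log n`. Its image
contains every irrational number of `[0, 1]`, a set of dimension `1`.
-/

open MeasureTheory Pointwise

open Filter Set

noncomputable def digitSum (N : ℝ) (u : ℕ → ℝ) : ℝ := ∑' i, u i / N ^ (i + 1)

section digitSum

variable {N M : ℝ} {u v : ℕ → ℝ}

lemma hasSum_div_pow_succ (hN : 1 < N) (M : ℝ) :
    HasSum (fun i : ℕ => M / N ^ (i + 1)) (M / (N - 1)) := by
  have hN0 : 0 < N := by linarith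
  have h := (hasSum_geometric_of_lt_one (inv_nonneg.2 hN0.le) (inv_lt_one_of_one_lt₀ hN)).mul_left
    (M / N)
  have hterm : (fun i : ℕ => M / N * N⁻¹ ^ i) = fun i => M / N ^ (i + 1) := by
    ext i
    rw [pow_succ, inv_pow]
    field_simp
  have hsum : M / N * (1 - N⁻¹)⁻¹ = M / (N - 1) := by
    have : N - 1 ≠ 0 := by linarith
    field_simp
  rwa [hterm, hsum] at h

lemma summable_digitSum (hN : 1 < N) (hu : ∀ i, u i ∈ Icc 0 M) :
    Summable fun i => u i / N ^ (i + 1) :=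
  (hasSum_div_pow_succ hN M).summable.of_nonneg_of_le
    (fun i => div_nonneg (hu i).1 (pow_pos (by linarith) _).le)
    (fun i => div_le_div_of_nonneg_right (hu i).2 (pow_pos (by linarith) _).le)

lemma digitSum_nonneg (hN : 1 < N) (hu : ∀ i, 0 ≤ u i) : 0 ≤ digitSum N u :=
  tsum_nonneg fun i => div_nonneg (hu i) (pow_pos (by linarith) _).le

lemma digitSum_pos (hN : 1 < N) (hu : ∀ i, u i ∈ Icc 0 M) {k : ℕ} (hk : 0 < u k) :
    0 < digitSum N u :=
  (summable_digitSum hN hu).tsum_pos (fun i => div_nonneg (hu i).1 (pow_pos (by linarith) _).le) k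
    (div_pos hk (pow_pos (by linarith) _))

lemma digitSum_le (hN : 1 < N) (hu : ∀ i, u i ∈ Icc 0 M) : digitSum N u ≤ M / (N - 1) :=
  hasSum_le (fun i => div_le_div_of_nonneg_right (hu i).2 (pow_pos (by linarith) _).le)
    (summable_digitSum hN hu).hasSum (hasSum_div_pow_succ hN M)

lemma digitSum_lt (hN : 1 < N) (hu : ∀ i, u i ∈ Icc 0 M) {k : ℕ} (hk : u k < M) :
    digitSum N u < M / (N - 1) :=
  hasSum_lt (fun i => div_le_div_of_nonneg_right (hu i).2 (pow_pos (by linarith) _).le)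
    (div_lt_div_of_pos_right hk (pow_pos (by linarith) _))
    (summable_digitSum hN hu).hasSum (hasSum_div_pow_succ hN M)

lemma digitSum_add (hN : 1 < N) (hu : ∀ i, u i ∈ Icc 0 M) (hv : ∀ i, v i ∈ Icc 0 M) :
    digitSum N (fun i => u i + v i) = digitSum N u + digitSum N v := by
  simp only [digitSum, add_div]
  exact (summable_digitSum hN hu).tsum_add (summable_digitSum hN hv)

lemma digitSum_eq_sum_add (hN : 1 < N) (hu : ∀ i, u i ∈ Icc 0 M) (j : ℕ) :
    digitSum N u = ∑ i ∈ Finset.range j, u i / N ^ (i + 1) +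
      (digitSum N fun i => u (i + j)) / N ^ j := by
  rw [digitSum, ← (summable_digitSum hN hu).sum_add_tsum_nat_add j, digitSum, ← tsum_div_const]
  congr 2
  ext i
  rw [div_div, ← pow_add, add_right_comm]

lemma digitSum_sub_digitSum (hN : 1 < N) (hu : ∀ i, u i ∈ Icc 0 M) (hv : ∀ i, v i ∈ Icc 0 M)
    {j : ℕ} (h : ∀ i < j, u i = v i) :
    digitSum N u - digitSum N v =
      ((digitSum N fun i => u (i + j)) - digitSum N fun i => v (i + j)) / N ^ j := by
  rw [digitSum_eq_sum_add hN hu j, digitSum_eq_sum_add hN hv j,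
    Finset.sum_congr rfl fun i hi => by rw [h i (Finset.mem_range.1 hi)]]
  ring

lemma digitSum_shift_eq (hN : 1 < N) (hu : ∀ i, u i ∈ Icc 0 M) (j : ℕ) :
    (digitSum N fun i => u (i + j)) = (u j + digitSum N fun i => u (i + (j + 1))) / N := by
  rw [digitSum, (summable_digitSum hN fun i => hu (i + j)).tsum_eq_zero_add, digitSum,
    add_div, ← tsum_div_const, zero_add, zero_add, pow_one]
  congr 2
  ext i
  rw [div_div, ← pow_succ, add_right_comm i 1 j, add_assoc]

end digitSum

theorem eq_of_digitSum_eq {n : ℕ} (hn : 2 ≤ n) {s c : ℕ → ℕ}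
    (hs : ∀ i, s i ≤ 2 * (n - 1)) (hs1 : ∀ i, s i ≠ 1) (hs2 : ∀ i, s i + 1 ≠ 2 * (n - 1))
    (hc : ∀ i, c i = 0 ∨ c i = 2 * (n - 1))
    (hc0 : ∃ᶠ i in atTop, c i = 0) (hcM : ∃ᶠ i in atTop, c i = 2 * (n - 1))
    (h : digitSum n (fun i => s i) = digitSum n (fun i => c i)) : s = c := by
  have hN : (1 : ℝ) < n := Nat.one_lt_cast.2 hn
  have hM : ((2 * (n - 1) : ℕ) : ℝ) / (n - 1) = 2 := by
    rw [Nat.cast_mul, Nat.cast_sub (by omega)]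
    field_simp [show (n : ℝ) - 1 ≠ 0 by linarith]
    ring
  have hsIcc : ∀ i, ((s i : ℕ) : ℝ) ∈ Icc 0 ((2 * (n - 1) : ℕ) : ℝ) :=
    fun i => ⟨Nat.cast_nonneg _, Nat.cast_le.2 (hs i)⟩
  have hcIcc : ∀ i, ((c i : ℕ) : ℝ) ∈ Icc 0 ((2 * (n - 1) : ℕ) : ℝ) :=
    fun i => ⟨Nat.cast_nonneg _, Nat.cast_le.2 (by rcases hc i with h | h <;> omega)⟩
  have htail : ∀ j, 0 < (digitSum n fun i => (c (i + j) : ℝ)) ∧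
      (digitSum n fun i => (c (i + j) : ℝ)) < 2 := by
    intro j
    obtain ⟨k, hjk, hk⟩ := frequently_atTop.1 hcM j
    obtain ⟨l, hjl, hl⟩ := frequently_atTop.1 hc0 j
    refine ⟨digitSum_pos hN (fun i => hcIcc (i + j)) (k := k - j) ?_,
      hM ▸ digitSum_lt hN (fun i => hcIcc (i + j)) (k := l - j) ?_⟩
    · rw [Nat.sub_add_cancel hjk, hk]; exact_mod_cast (by omega : 0 < 2 * (n - 1))
    · rw [Nat.sub_add_cancel hjl, hl]; exact_mod_cast (by omega : 0 < 2 * (n - 1))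
  have hstep : ∀ j, (∀ i < j, s i = c i) → s j = c j := by
    intro j hpre
    have hj : (digitSum n fun i => (s (i + j) : ℝ)) = digitSum n fun i => (c (i + j) : ℝ) := by
      have := digitSum_sub_digitSum hN hsIcc hcIcc (j := j) fun i hi => by rw [hpre i hi]
      rw [h, sub_self, eq_comm, div_eq_zero_iff, sub_eq_zero] at this
      exact this.resolve_right (pow_ne_zero _ (by linarith))
    rw [digitSum_shift_eq hN hsIcc, digitSum_shift_eq hN hcIcc, div_left_inj' (by linarith)] at hj
    have hsTail₀ := digitSum_nonneg hN fun i => (hsIcc (i + (j + 1))).1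
    have hsTail₂ := hM ▸ digitSum_le hN fun i => hsIcc (i + (j + 1))
    have hcTail := htail (j + 1)
    have hlt₁ : (s j : ℝ) < c j + 2 := by linarith
    have hlt₂ : (c j : ℝ) < s j + 2 := by linarith
    norm_cast at hlt₁ hlt₂
    rcases hc j with h | h <;> have := hs j <;> have := hs1 j <;> have := hs2 j <;> omega
  funext j
  exact Nat.strong_induction_on j hstep

noncomputable def extremalPoint (n : ℕ) (d : ℕ → Fin 2) : ℝ :=
  digitSum n fun i => ((n - 1) * d i : ℕ)

section extremalPoint

variable {n : ℕ} {A : Set ℕ}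

lemma extremalDigit_mem_Icc (hn : 1 ≤ n) (b : Fin 2) :
    (((n - 1) * b : ℕ) : ℝ) ∈ Icc 0 ((n : ℝ) - 1) := by
  fin_cases b <;> simp [Nat.cast_sub hn, hn]

lemma extremalPoint_mem_linCantor (h0 : 0 ∈ A) (htop : n - 1 ∈ A) (d : ℕ → Fin 2) :
    extremalPoint n d ∈ linCantor n A :=
  ⟨fun i => (n - 1) * d i,
    fun i => Fin.forall_fin_two (p := fun b : Fin 2 => (n - 1) * (b : ℕ) ∈ A) |>.2
      ⟨by simpa, by simpa⟩ (d i), rfl⟩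

lemma extremalPoint_mem_Icc (hn : 2 ≤ n) (d : ℕ → Fin 2) : extremalPoint n d ∈ Icc 0 1 := by
  have hN : (1 : ℝ) < n := Nat.one_lt_cast.2 hn
  refine ⟨digitSum_nonneg hN fun i => (extremalDigit_mem_Icc (by omega) _).1, ?_⟩
  have := digitSum_le hN fun i => extremalDigit_mem_Icc (n := n) (by omega) (d i)
  rwa [div_self (by linarith)] at this

lemma le_abs_extremalPoint_sub (hn : 2 ≤ n) {d d' : ℕ → Fin 2} {j : ℕ}
    (hpre : ∀ i < j, d i = d' i) (hj : d j ≠ d' j) :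
    ((n : ℝ) - 2) / n ^ (j + 1) ≤ |extremalPoint n d - extremalPoint n d'| := by
  have hN : (1 : ℝ) < n := Nat.one_lt_cast.2 hn
  have hu := fun i => extremalDigit_mem_Icc (n := n) (by omega) (d i)
  have hv := fun i => extremalDigit_mem_Icc (n := n) (by omega) (d' i)
  rw [extremalPoint, extremalPoint, digitSum_sub_digitSum hN hu hv fun i hi => by rw [hpre i hi],
    digitSum_shift_eq hN hu, digitSum_shift_eq hN hv, ← sub_div, div_div, ← pow_succ',
    abs_div, abs_of_pos (pow_pos (by linarith : (0 : ℝ) < n) _)]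
  gcongr
  set T := digitSum n fun i => (((n - 1) * d (i + (j + 1)) : ℕ) : ℝ)
  set T' := digitSum n fun i => (((n - 1) * d' (i + (j + 1)) : ℕ) : ℝ)
  have hT : T ∈ Icc 0 1 := by
    rw [← div_self (by linarith : (n : ℝ) - 1 ≠ 0)]
    exact ⟨digitSum_nonneg hN fun i => (hu _).1, digitSum_le hN fun i => hu _⟩
  have hT' : T' ∈ Icc 0 1 := by
    rw [← div_self (by linarith : (n : ℝ) - 1 ≠ 0)]
    exact ⟨digitSum_nonneg hN fun i => (hv _).1, digitSum_le hN fun i => hv _⟩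
  have hdigit : |(((n - 1) * d j : ℕ) : ℝ) - (((n - 1) * d' j : ℕ) : ℝ)| = n - 1 := by
    generalize d j = a, d' j = b at hj
    fin_cases a <;> fin_cases b <;> simp [Nat.cast_sub (by omega : 1 ≤ n)] at hj ⊢
    · rw [abs_of_nonpos (by linarith)]; ring
    · omega
  have hTT : |T' - T| ≤ 1 := abs_sub_le_iff.2 ⟨by linarith [hT.1, hT'.2], by linarith [hT.2, hT'.1]⟩
  have hrev := abs_sub_abs_le_abs_sub (((n - 1) * d j : ℕ) - (((n - 1) * d' j : ℕ) : ℝ)) (T' - T)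
  rw [show ∀ a b : ℝ, a + T - (b + T') = a - b - (T' - T) by intros; ring]
  linarith

end extremalPoint

lemma abs_ofDigits_sub_le_rpow {n : ℕ} (hn : 3 ≤ n) (d d' : ℕ → Fin 2) :
    |Real.ofDigits d - Real.ofDigits d'| ≤
      2 * |extremalPoint n d - extremalPoint n d'| ^ Real.logb n 2 := by
  have hN : (1 : ℝ) < n := Nat.one_lt_cast.2 (by omega)
  have hα : 0 < Real.logb n 2 := Real.logb_pos hN one_lt_two
  by_cases hdd : d = d'
  · subst hdd
    simp only [sub_self, abs_zero]
    positivity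
  have hex : ∃ j, d j ≠ d' j := by
    by_contra! h
    exact hdd (funext h)
  obtain ⟨k, hk, hpre⟩ : ∃ k, d k ≠ d' k ∧ ∀ i < k, d i = d' i :=
    ⟨Nat.find hex, Nat.find_spec hex, fun i hi => not_not.1 (Nat.find_min hex hi)⟩
  have hsep := le_abs_extremalPoint_sub (n := n) (by omega) hpre hk
  have hscale : ((n : ℝ) ^ (k + 1))⁻¹ ^ Real.logb n 2 = (2 ^ (k + 1))⁻¹ := by
    rw [Real.inv_rpow (by positivity), ← Real.rpow_pow_comm (by positivity),
      Real.rpow_logb (by linarith) hN.ne' two_pos]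
  calc |Real.ofDigits d - Real.ofDigits d'| ≤ (((2 : ℕ) : ℝ) ^ k)⁻¹ :=
        Real.abs_ofDigits_sub_ofDigits_le hpre
    _ = 2 * ((n : ℝ) ^ (k + 1))⁻¹ ^ Real.logb n 2 := by
        rw [hscale, pow_succ]
        push_cast
        field_simp
    _ ≤ 2 * |extremalPoint n d - extremalPoint n d'| ^ Real.logb n 2 := by
        gcongr
        refine le_trans ?_ hsep
        rw [inv_eq_one_div]
        gcongr
        have : (3 : ℝ) ≤ n := by exact_mod_cast hn
        linarith

lemma dimH_image_le_of_edist_le {X Y Z : Type*} [EMetricSpace Y] [EMetricSpace Z]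
    {f : X → Y} {g : X → Z} {s : Set X} {C r : NNReal} (hr : 0 < r)
    (h : ∀ x ∈ s, ∀ y ∈ s, edist (g x) (g y) ≤ C * edist (f x) (f y) ^ (r : ℝ)) :
    dimH (g '' s) ≤ dimH (f '' s) / r := by
  rcases s.eq_empty_or_nonempty with rfl | ⟨x₀, -⟩
  · simp
  have : Nonempty X := ⟨x₀⟩
  set k := Function.invFunOn f s
  have hk : ∀ x ∈ s, k (f x) ∈ s ∧ f (k (f x)) = f x :=
    fun x hx => Function.invFunOn_pos ⟨x, hx, rfl⟩
  -- `h` forces `g` to be constant on the fibres of `f`, so `g ∘ k` recovers `g` on `s`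
  have hgk : ∀ x ∈ s, g (k (f x)) = g x := fun x hx => by
    have := h _ (hk x hx).1 x hx
    rwa [(hk x hx).2, edist_self, ENNReal.zero_rpow_of_pos (by exact_mod_cast hr), mul_zero,
      nonpos_iff_eq_zero, edist_eq_zero] at this
  have himage : g '' s = (g ∘ k) '' (f '' s) := by
    rw [Set.image_image]
    exact Set.image_congr fun x hx => (hgk x hx).symm
  have hholder : HolderOnWith C r (g ∘ k) (f '' s) := by
    rintro _ ⟨x, hx, rfl⟩ _ ⟨y, hy, rfl⟩
    simp only [Function.comp_apply, hgk x hx, hgk y hy]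
    exact h x hx y hy
  rw [himage]
  exact hholder.dimH_image_le hr

def allDigitsFrequent (b : ℕ) : Set (ℕ → Fin b) := {d | ∀ k, ∃ᶠ i in atTop, d i = k}

lemma ofDigits_const {b : ℕ} (hb : 1 < b) (c : Fin b) :
    Real.ofDigits (fun _ => c) = c / (b - 1) := by
  simp only [Real.ofDigits, Real.ofDigitsTerm, ← div_eq_mul_inv]
  exact (hasSum_div_pow_succ (Nat.one_lt_cast.2 hb) _).tsum_eq

lemma ofDigits_mem_range_ratCast {b : ℕ} (hb : 1 < b) {d : ℕ → Fin b} {c : Fin b}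
    (h : ∀ᶠ i in atTop, d i = c) : Real.ofDigits d ∈ range ((↑) : ℚ → ℝ) := by
  obtain ⟨m, hm⟩ := eventually_atTop.1 h
  have htail : (fun i => d (i + m)) = fun _ => c := funext fun i => hm _ (Nat.le_add_left m i)
  rw [Real.ofDigits_eq_sum_add_ofDigits d m, htail, ofDigits_const hb]
  refine ⟨∑ i ∈ Finset.range m, ((d i : ℕ) : ℚ) * ((b : ℚ) ^ (i + 1))⁻¹ +
    ((b : ℚ) ^ m)⁻¹ * ((c : ℕ) / (b - 1)), ?_⟩
  push_cast
  rfl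

lemma Icc_diff_range_ratCast_subset_ofDigits_image :
    Icc 0 1 \ range ((↑) : ℚ → ℝ) ⊆ Real.ofDigits '' allDigitsFrequent 2 := by
  rintro x ⟨hx, hxq⟩
  obtain ⟨d, -, rfl⟩ := Real.ofDigits_SurjOn one_lt_two hx
  refine ⟨d, fun k => ?_, rfl⟩
  by_contra hk
  refine hxq (ofDigits_mem_range_ratCast one_lt_two (c := 1 - k) ((not_frequently.1 hk).mono ?_))
  intro i hi
  generalize d i = a at hi
  fin_cases a <;> fin_cases k <;> simp_all

lemma one_le_dimH_Icc_diff_range_ratCast : 1 ≤ dimH (Icc (0 : ℝ) 1 \ range ((↑) : ℚ → ℝ)) := by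
  have h := dimH_mono (Set.subset_union_left.trans Set.sdiff_union_self.superset :
    Icc (0 : ℝ) 1 ⊆ Icc 0 1 \ range ((↑) : ℚ → ℝ) ∪ range ((↑) : ℚ → ℝ))
  rwa [dimH_union, dimH_countable (countable_range _),
    Real.dimH_of_nonempty_interior (by simp [interior_Icc]), Module.finrank_self, Nat.cast_one,
    max_eq_left zero_le] at h

lemma ofReal_logb_le_dimH_image {n : ℕ} (hn : 3 ≤ n) :
    ENNReal.ofReal (Real.logb n 2) ≤
      dimH ((fun d => extremalPoint n d + extremalPoint n d) '' allDigitsFrequent 2) := by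
  have hα : 0 < Real.logb n 2 := Real.logb_pos (Nat.one_lt_cast.2 (by omega)) one_lt_two
  set r := (Real.logb n 2).toNNReal
  have hr : 0 < r := Real.toNNReal_pos.2 hα
  have hcmp : ∀ d ∈ allDigitsFrequent 2, ∀ d' ∈ allDigitsFrequent 2,
      edist (Real.ofDigits d) (Real.ofDigits d') ≤
        2 * edist (extremalPoint n d + extremalPoint n d)
          (extremalPoint n d' + extremalPoint n d') ^ (r : ℝ) := by
    intro d _ d' _
    rw [edist_dist, edist_dist, Real.dist_eq, Real.dist_eq, Real.coe_toNNReal _ hα.le,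
      ENNReal.ofReal_rpow_of_nonneg (abs_nonneg _) hα.le, ← ENNReal.ofReal_ofNat 2,
      ← ENNReal.ofReal_mul zero_le_two]
    refine ENNReal.ofReal_le_ofReal ((abs_ofDigits_sub_le_rpow hn d d').trans ?_)
    refine mul_le_mul_of_nonneg_left (Real.rpow_le_rpow (abs_nonneg _) ?_ hα.le) zero_le_two
    rw [show ∀ a b : ℝ, a + a - (b + b) = 2 * (a - b) by intros; ring, abs_mul, abs_two]
    linarith [abs_nonneg (extremalPoint n d - extremalPoint n d')]
  have h1 := one_le_dimH_Icc_diff_range_ratCast.trans ((dimH_mono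
    Icc_diff_range_ratCast_subset_ofDigits_image).trans (dimH_image_le_of_edist_le hr hcmp))
  rwa [ENNReal.le_div_iff_mul_le (Or.inl (by simpa using hr.ne')) (Or.inl ENNReal.coe_ne_top),
    one_mul] at h1

section uniqueness

variable {n : ℕ} {A : Set ℕ}

lemma eq_extremalPoint_of_add_eq (hn : 2 ≤ n) (hA : ∀ a ∈ A, a < n) (h1 : 1 ∉ A)
    (h2 : n - 2 ∉ A) {d : ℕ → Fin 2} (hd : d ∈ allDigitsFrequent 2) {x y : ℝ}
    (hx : x ∈ linCantor n A) (hy : y ∈ linCantor n A)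
    (hxy : x + y = extremalPoint n d + extremalPoint n d) :
    x = extremalPoint n d ∧ y = extremalPoint n d := by
  obtain ⟨a, ha, rfl⟩ := hx
  obtain ⟨a', ha', rfl⟩ := hy
  have hN : (1 : ℝ) < n := Nat.one_lt_cast.2 hn
  set e : ℕ → ℕ := fun i => (n - 1) * d i
  have hd01 : ∀ i, (d i : ℕ) = 0 ∨ (d i : ℕ) = 1 := fun i => by have := (d i).isLt; omega
  have ha_le : ∀ i, a i ≤ n - 1 := fun i => Nat.le_sub_one_of_lt (hA _ (ha i))
  have ha'_le : ∀ i, a' i ≤ n - 1 := fun i => Nat.le_sub_one_of_lt (hA _ (ha' i))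
  have hIcc : ∀ {u : ℕ → ℕ}, (∀ i, u i ≤ n - 1) → ∀ i, ((u i : ℕ) : ℝ) ∈ Icc 0 (n : ℝ) :=
    fun hu i => ⟨Nat.cast_nonneg _, by exact_mod_cast (hu i).trans (Nat.sub_le n 1)⟩
  have he_le : ∀ i, e i ≤ n - 1 := fun i => by rcases hd01 i with h | h <;> simp [e, h]
  have hdigits : (fun i => a i + a' i) = fun i => e i + e i := by
    refine eq_of_digitSum_eq hn (fun i => by have := ha_le i; have := ha'_le i; omega)
      (fun i hi => ?_) (fun i hi => ?_) (fun i => ?_) ((hd 0).mono fun i hi => by simp [e, hi])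
      ((hd 1).mono fun i hi => by simp [e, hi]; omega) ?_
    · rcases (by omega : a i = 1 ∨ a' i = 1) with h | h
      exacts [h1 (h ▸ ha i), h1 (h ▸ ha' i)]
    · rcases (by have := ha_le i; have := ha'_le i; omega : a i = n - 2 ∨ a' i = n - 2) with h | h
      exacts [h2 (h ▸ ha i), h2 (h ▸ ha' i)]
    · rcases hd01 i with h | h
      · simp [e, h]
      · simp [e, h]; omega
    · push_cast
      rw [digitSum_add hN (hIcc ha_le) (hIcc ha'_le), digitSum_add hN (hIcc he_le) (hIcc he_le)]
      exact hxy
  have hcoord : ∀ i, a i = e i ∧ a' i = e i := fun i => by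
    have := congrFun hdigits i
    have := ha_le i
    have := ha'_le i
    rcases hd01 i with h | h <;> simp only [e, h] at * <;> omega
  exact ⟨congrArg (digitSum n) (funext fun i => by rw [(hcoord i).1]),
    congrArg (digitSum n) (funext fun i => by rw [(hcoord i).2])⟩

lemma existsUnique_add_eq_extremalPoint (hn : 2 ≤ n) (h0 : 0 ∈ A) (htop : n - 1 ∈ A)
    (hA : ∀ a ∈ A, a < n) (h1 : 1 ∉ A) (h2 : n - 2 ∉ A) {d : ℕ → Fin 2}
    (hd : d ∈ allDigitsFrequent 2) :
    ∃! p : ℝ × ℝ, p.1 ∈ linCantor n A ∧ p.2 ∈ linCantor n A ∧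
      p.1 ≤ p.2 ∧ p.1 + p.2 = extremalPoint n d + extremalPoint n d :=
  ⟨(extremalPoint n d, extremalPoint n d),
    ⟨extremalPoint_mem_linCantor h0 htop d, extremalPoint_mem_linCantor h0 htop d, le_rfl, rfl⟩,
    fun _ ⟨hx, hy, _, hxy⟩ =>
      Prod.ext (eq_extremalPoint_of_add_eq hn hA h1 h2 hd hx hy hxy).1
        (eq_extremalPoint_of_add_eq hn hA h1 h2 hd hx hy hxy).2⟩

end uniqueness

theorem uniqueness_dim_lower_general (n : ℕ) (hn : 4 ≤ n) (A : Set ℕ)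
    (h0 : 0 ∈ A) (htop : n - 1 ∈ A) (hA : ∀ a ∈ A, a < n)
    (h1 : 1 ∉ A) (h2 : n - 2 ∉ A) :
    ENNReal.ofReal (Real.log 2 / Real.log n) ≤
      dimH {z : ℝ | z ∈ Set.Icc (0 : ℝ) 2 ∧
        ∃! p : ℝ × ℝ, p.1 ∈ linCantor n A ∧ p.2 ∈ linCantor n A ∧
          p.1 ≤ p.2 ∧ p.1 + p.2 = z} ∧
    0 < ENNReal.ofReal (Real.log 2 / Real.log n) := by
  rw [Real.log_div_log]
  refine ⟨(ofReal_logb_le_dimH_image (by omega)).trans (dimH_mono ?_),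
    ENNReal.ofReal_pos.2 (Real.logb_pos (Nat.one_lt_cast.2 (by omega)) one_lt_two)⟩
  rintro _ ⟨d, hd, rfl⟩
  have hW := extremalPoint_mem_Icc (n := n) (by omega) d
  exact ⟨⟨by linarith [hW.1], by linarith [hW.2]⟩,
    existsUnique_add_eq_extremalPoint (by omega) h0 htop hA h1 h2 hd⟩

/-- If `A` is `n`-good and `1 ∉ A`, `n-2 ∉ A`, then
`dim_H(U_A) ≥ log 2 / log n > 0`. -/
theorem uniqueness_dim_lower (n : ℕ) (hn : 4 ≤ n) (A : Set ℕ)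
    (h0 : 0 ∈ A) (htop : n - 1 ∈ A) (hA : ∀ a ∈ A, a < n)
    (h1 : 1 ∉ A) (h2 : n - 2 ∉ A)
    (hgood : linCantor n A + linCantor n A = Set.Icc (0 : ℝ) 2) :
    ENNReal.ofReal (Real.log 2 / Real.log n) ≤
      dimH {z : ℝ | z ∈ Set.Icc (0 : ℝ) 2 ∧
        ∃! p : ℝ × ℝ, p.1 ∈ linCantor n A ∧ p.2 ∈ linCantor n A ∧
          p.1 ≤ p.2 ∧ p.1 + p.2 = z} ∧
    0 < ENNReal.ofReal (Real.log 2 / Real.log n) :=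
  uniqueness_dim_lower_general n hn A h0 htop hA h1 h2
end

section
/- Let A = {0,1,4} and n = 5. Then (7/5, 8/5) ∩ (C_{A,5} + C_{A,5}) = ∅; in particular C_{A,5} + C_{A,5} ≠ [0,2]. -/
open Pointwise

section linCantor

variable {n : ℕ} {A : Set ℕ}

theorem exists_ofDigits_eq_of_mem_linCantor (hA : ∀ a ∈ A, a < n) {x : ℝ}
    (hx : x ∈ linCantor n A) :
    ∃ d : ℕ → Fin n, (∀ i, (d i : ℕ) ∈ A) ∧ Real.ofDigits d = x := by
  obtain ⟨a, ha, rfl⟩ := hx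
  exact ⟨fun i ↦ ⟨a i, hA _ (ha i)⟩, ha, by simp [Real.ofDigits, Real.ofDigitsTerm, div_eq_mul_inv]⟩

theorem exists_mem_Icc_of_mem_linCantor (hA : ∀ a ∈ A, a < n) {x : ℝ}
    (hx : x ∈ linCantor n A) :
    ∃ b ∈ A, x ∈ Set.Icc ((b : ℝ) / n) ((b + 1) / n) := by
  obtain ⟨d, hd, rfl⟩ := exists_ofDigits_eq_of_mem_linCantor hA hx
  -- Peel off the first digit: `x = d₀ / n + (0.d₁d₂…) / n` with `0.d₁d₂… ∈ [0, 1]`.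
  have hsplit := Real.ofDigits_eq_sum_add_ofDigits d 1
  have htail := Real.ofDigits_nonneg fun i ↦ d (i + 1)
  have htail' := Real.ofDigits_le_one fun i ↦ d (i + 1)
  simp only [Finset.range_one, Finset.sum_singleton, Real.ofDigitsTerm, zero_add, pow_one] at hsplit
  have hn : (0 : ℝ) ≤ (n : ℝ)⁻¹ := by positivity
  refine ⟨d 0, hd 0, ?_, ?_⟩ <;>
    simp only [hsplit, div_eq_mul_inv, add_mul, one_mul] <;>
    nlinarith [mul_nonneg hn htail, mul_le_mul_of_nonneg_left htail' hn]

theorem linCantor_add_linCantor_subset (hA : ∀ a ∈ A, a < n) :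
    linCantor n A + linCantor n A ⊆ ⋃ b ∈ A + A, Set.Icc ((b : ℝ) / n) ((b + 2) / n) := by
  rintro _ ⟨x, hx, y, hy, rfl⟩
  obtain ⟨b, hb, hbx⟩ := exists_mem_Icc_of_mem_linCantor hA hx
  obtain ⟨c, hc, hcy⟩ := exists_mem_Icc_of_mem_linCantor hA hy
  refine Set.mem_biUnion (Set.add_mem_add hb hc) ?_
  convert Set.Icc_add_Icc_subset _ _ _ _ (Set.add_mem_add hbx hcy) using 1
  push_cast
  ring_nf

end linCantor

/-- For `A = {0,1,4}`, `n = 5`: `(7/5, 8/5)` misses `C_A + C_A`, so `A` is not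
`5`-good. -/
theorem not_good_014 :
    Set.Ioo (7 / 5 : ℝ) (8 / 5) ∩ (linCantor 5 {0, 1, 4} + linCantor 5 {0, 1, 4}) = ∅ ∧
    linCantor 5 {0, 1, 4} + linCantor 5 {0, 1, 4} ≠ Set.Icc (0 : ℝ) 2 := by
  have hgap : Set.Ioo (7 / 5 : ℝ) (8 / 5) ∩ (linCantor 5 {0, 1, 4} + linCantor 5 {0, 1, 4}) = ∅ := by
    refine Set.eq_empty_of_forall_notMem fun x ⟨hx, hsum⟩ ↦ ?_
    have hdigits : ∀ a ∈ ({0, 1, 4} : Set ℕ), a < 5 := by simp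
    obtain ⟨_, ⟨b, hb, c, hc, rfl⟩, hbc⟩ :=
      Set.mem_iUnion₂.1 (linCantor_add_linCantor_subset hdigits hsum)
    rcases hb with rfl | rfl | rfl <;> rcases hc with rfl | rfl | rfl <;>
      norm_num at hbc <;> linarith [hx.1, hx.2, hbc.1, hbc.2]
  refine ⟨hgap, fun h ↦ ?_⟩
  have : (3 / 2 : ℝ) ∈ Set.Ioo (7 / 5 : ℝ) (8 / 5) ∩ Set.Icc 0 2 := by norm_num
  rw [← h, hgap] at this
  exact this
end

section
/- Let n = 5 and A = {0,1,7,8} ⊆ ℤ. Then C_{A,5} + C_{A,5} = [0, 6/5] ∪ [7/5, 13/5] ∪ [14/5, 4], a union of exactly three disjoint closed intervals. -/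
open Pointwise

/-!
Adding digit sequences termwise gives `C_{A,n} + C_{A',n} = C_{A+A',n}`, and here
`A + A = {0,1,2,7,8,9,14,15,16}`. Write `I = [0,6/5] ∪ [7/5,13/5] ∪ [14/5,4]`. Every point of
`C_{A+A,5}` is `(d + y)/5` with `d ∈ A + A` and `y ∈ [0,4]`, and these all lie in `I`. Conversely
every `y ∈ I` has a digit `d ∈ A + A` with `5y - d ∈ I`; iterating this map produces a digit
expansion of `y` whose remainders stay bounded, hence tend to zero after scaling by `5⁻ᵏ`.
-/

open Set Filter Topology

namespace LinCantor

variable {n : ℕ} {A : Set ℕ}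

lemma hasSum_const_div_pow (hn : 1 < n) (M : ℝ) :
    HasSum (fun i : ℕ => M / n ^ (i + 1)) (M / (n - 1)) := by
  have hn' : (1 : ℝ) < n := by exact_mod_cast hn
  have hgeom := (hasSum_geometric_of_lt_one (by positivity) (inv_lt_one_of_one_lt₀ hn')).mul_left
    (M / n)
  have hterm : (fun i : ℕ => M / n ^ (i + 1)) = fun i => M / n * ((n : ℝ)⁻¹) ^ i := by
    funext i
    rw [pow_succ, inv_pow]
    field_simp
  have hsum : M / (n - 1) = M / n * (1 - (n : ℝ)⁻¹)⁻¹ := by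
    have : (n : ℝ) - 1 ≠ 0 := by linarith
    field_simp
  rwa [hterm, hsum]

lemma summable_digits (hn : 1 < n) (hA : BddAbove A) {a : ℕ → ℕ} (ha : ∀ i, a i ∈ A) :
    Summable fun i => (a i : ℝ) / n ^ (i + 1) := by
  obtain ⟨M, hM⟩ := hA
  refine (hasSum_const_div_pow hn M).summable.of_nonneg_of_le (fun i => by positivity) fun i => ?_
  gcongr
  exact_mod_cast hM (ha i)

lemma linCantor_subset_Icc (hn : 1 < n) {M : ℕ} (hM : M ∈ upperBounds A) :
    linCantor n A ⊆ Icc 0 (M / (n - 1)) := by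
  rintro x ⟨a, ha, rfl⟩
  refine ⟨tsum_nonneg fun i => by positivity, ?_⟩
  rw [← (hasSum_const_div_pow hn M).tsum_eq]
  refine (summable_digits hn ⟨M, hM⟩ ha).tsum_le_tsum (fun i => ?_)
    (hasSum_const_div_pow hn M).summable
  gcongr
  exact_mod_cast hM (ha i)

lemma exists_eq_digit_add_div (hn : 1 < n) (hA : BddAbove A) {x : ℝ} (hx : x ∈ linCantor n A) :
    ∃ d ∈ A, ∃ y ∈ linCantor n A, x = (d + y) / n := by
  obtain ⟨a, ha, rfl⟩ := hx
  refine ⟨a 0, ha 0, _, ⟨fun i => a (i + 1), fun i => ha (i + 1), rfl⟩, ?_⟩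
  rw [(summable_digits hn hA ha).tsum_eq_zero_add, add_div, ← tsum_div_const]
  congr 1
  · simp
  · congr 1
    funext i
    rw [pow_succ _ (i + 1), div_div]

lemma subset_linCantor_of_forall_exists_digit (hn : 1 < n) {K : Set ℝ}
    (hK : Bornology.IsBounded K) (hstep : ∀ y ∈ K, ∃ d ∈ A, n * y - d ∈ K) :
    K ⊆ linCantor n A := by
  intro x hx
  choose digit hdigit hrest using hstep
  let shift : K → K := fun y => ⟨n * y - digit y y.2, hrest y y.2⟩
  let y : ℕ → K := fun k => shift^[k] ⟨x, hx⟩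
  let a : ℕ → ℕ := fun k => digit (y k) (y k).2
  have hy_succ (k : ℕ) : (y (k + 1) : ℝ) = n * y k - a k := by
    simp only [y, Function.iterate_succ_apply']
    rfl
  have hn0 : (n : ℝ) ≠ 0 := by positivity
  have hpartial (k : ℕ) :
      x - ∑ i ∈ Finset.range k, (a i : ℝ) / n ^ (i + 1) = y k / n ^ k := by
    induction k with
    | zero => simp [y]
    | succ k ih =>
      rw [Finset.sum_range_succ, hy_succ, ← sub_sub, ih]
      field_simp
      ring
  obtain ⟨R, hR⟩ := hK.exists_norm_le
  have hremainder : Tendsto (fun k : ℕ => R / (n : ℝ) ^ k) atTop (𝓝 0) :=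
    tendsto_const_nhds.div_atTop (tendsto_pow_atTop_atTop_of_one_lt (by exact_mod_cast hn))
  refine ⟨a, fun k => hdigit _ _, ?_⟩
  refine (((hasSum_iff_tendsto_nat_of_nonneg (fun i => by positivity) x).2 ?_).tsum_eq).symm
  rw [tendsto_iff_norm_sub_tendsto_zero]
  refine squeeze_zero (fun _ => norm_nonneg _) (fun k => ?_) hremainder
  rw [norm_sub_rev, hpartial, norm_div, norm_pow, Real.norm_natCast]
  gcongr
  exact hR _ (y k).2

theorem linCantor_add_linCantor (hn : 1 < n) {A A' : Set ℕ} (hA : BddAbove A)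
    (hA' : BddAbove A') : linCantor n A + linCantor n A' = linCantor n (A + A') := by
  apply Subset.antisymm
  · rintro _ ⟨_, ⟨a, ha, rfl⟩, _, ⟨a', ha', rfl⟩, rfl⟩
    refine ⟨fun i => a i + a' i, fun i => add_mem_add (ha i) (ha' i), ?_⟩
    beta_reduce
    rw [← (summable_digits hn hA ha).tsum_add (summable_digits hn hA' ha')]
    simp only [Nat.cast_add, add_div]
  · rintro _ ⟨b, hb, rfl⟩
    choose a ha a' ha' hsum using hb
    refine ⟨_, ⟨a, ha, rfl⟩, _, ⟨a', ha', rfl⟩, ?_⟩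
    beta_reduce at hsum ⊢
    rw [← (summable_digits hn hA ha).tsum_add (summable_digits hn hA' ha')]
    simp only [← add_div, ← Nat.cast_add, hsum]

end LinCantor

open LinCantor

namespace Sum0178

def sumDigits : Set ℕ := {0, 1, 2, 7, 8, 9, 14, 15, 16}

def threeIntervals : Set ℝ := Icc 0 (6 / 5) ∪ Icc (7 / 5) (13 / 5) ∪ Icc (14 / 5) 4

lemma digits_add_digits : ({0, 1, 7, 8} : Set ℕ) + {0, 1, 7, 8} = sumDigits := by
  ext d
  simp only [Set.mem_add, sumDigits, Set.mem_insert_iff, Set.mem_singleton_iff]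
  constructor
  · rintro ⟨a, ha, b, hb, rfl⟩
    rcases ha with rfl | rfl | rfl | rfl <;> rcases hb with rfl | rfl | rfl | rfl <;> simp
  · rintro (rfl | rfl | rfl | rfl | rfl | rfl | rfl | rfl | rfl) <;> simp

lemma div_five_mem_threeIntervals {d : ℕ} (hd : d ∈ sumDigits) {y : ℝ} (hy : y ∈ Icc 0 4) :
    (d + y) / 5 ∈ threeIntervals := by
  simp only [sumDigits, Set.mem_insert_iff, Set.mem_singleton_iff] at hd
  simp only [threeIntervals, mem_union, mem_Icc] at hy ⊢
  rcases hd with rfl | rfl | rfl | rfl | rfl | rfl | rfl | rfl | rfl <;> norm_num <;> grind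

/- `5y` lies in `[0,6]`, `[7,13]` or `[14,20]`; subtracting `0`, `7` or `14` brings it to `[0,6]`,
which is covered by `threeIntervals` and its translates by `1` and `2`, as its gaps are shorter
than `1`. -/
lemma exists_digit_five_mul_sub_mem {y : ℝ} (hy : y ∈ threeIntervals) :
    ∃ d ∈ sumDigits, 5 * y - d ∈ threeIntervals := by
  simp only [sumDigits, threeIntervals, mem_union, mem_Icc, Set.mem_insert_iff,
    Set.mem_singleton_iff, exists_eq_or_imp, exists_eq_left] at hy ⊢
  push_cast
  grind

lemma linCantor_five_sumDigits : linCantor 5 sumDigits = threeIntervals := by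
  have hn : 1 < 5 := by norm_num
  have hM : 16 ∈ upperBounds sumDigits := by simp [sumDigits, upperBounds]
  apply Subset.antisymm
  · intro x hx
    obtain ⟨d, hd, y, hy, rfl⟩ := exists_eq_digit_add_div hn ⟨16, hM⟩ hx
    have hy4 : y ∈ Icc 0 4 := by
      convert linCantor_subset_Icc hn hM hy using 2
      norm_num
    exact_mod_cast div_five_mem_threeIntervals hd hy4
  · refine subset_linCantor_of_forall_exists_digit hn ?_ fun y hy => ?_
    · exact ((Metric.isBounded_Icc _ _).union (Metric.isBounded_Icc _ _)).union
        (Metric.isBounded_Icc _ _)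
    · exact_mod_cast exists_digit_five_mul_sub_mem hy

end Sum0178

open Sum0178 in
/-- For `A = {0,1,7,8}` and `n = 5`, the sumset `C_{A,5} + C_{A,5}` is the union
of exactly three disjoint closed intervals. -/
theorem sum_0178 :
    linCantor 5 {0, 1, 7, 8} + linCantor 5 {0, 1, 7, 8} =
      Set.Icc (0 : ℝ) (6 / 5) ∪ Set.Icc (7 / 5 : ℝ) (13 / 5) ∪
        Set.Icc (14 / 5 : ℝ) 4 := by
  rw [linCantor_add_linCantor (by norm_num) (Set.toFinite _).bddAbove (Set.toFinite _).bddAbove,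
    digits_add_digits, linCantor_five_sumDigits]
  rfl
end

section
/- For every n ≥ 4, the set A = {n^i : 0 ≤ i ≤ m} ∪ {1} (i.e., powers n^0=1, n, n², ..., n^m) has the property that C_{A,n} + C_{A,n} contains no interval, regardless of m. Precisely: every element of C_{A,n} + C_{A,n} has a base-n expansion with at most 2(m+1) consecutive digits equal to 3, while real numbers whose base-n expansion contains 2(m+1)+1 consecutive digits equal to 3 are dense in ℝ; hence C_{A,n} + C_{A,n} has empty interior. -/
/-!
Take `z = (k + τ) / n ^ p`, where `τ` has the base-`n` digits `3, 2, 3, 2, …` (so `τ < 1` once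
`n ≥ 4`): on average `z` has digit sum `5 / 2` per place. A term `n ^ (e i) / n ^ (i + 1)` of an
element of `C_{A,n}` is a single unit at place `i + 1 - e i`, so `x + y` supplies only about two
units per place. If `x + y = z`, the carry `M` between `n ^ j * (x + y)` and `n ^ j * z` stays in
`[0, 2 n ^ m]` and satisfies `n * M j + d j = c j + M (j + 1)`, where `d j` is the digit of `z`
and `c j` the number of units at place `j`; over a long window of places the missing `1 / 2` per
place would force the carry past its bound. Such `z` are dense, so `C_{A,n} + C_{A,n}` has empty
interior.
-/

open Pointwise

open Finset

namespace PowersNotGood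

lemma hasSum_div_pow_succ {r : ℝ} (hr : 1 < r) (B : ℝ) :
    HasSum (fun i : ℕ => B / r ^ (i + 1)) (B / (r - 1)) := by
  have hr0 : r ≠ 0 := by positivity
  have hr1 : r - 1 ≠ 0 := sub_ne_zero.2 hr.ne'
  have h := (hasSum_geometric_of_lt_one (inv_nonneg.2 (zero_le_one.trans hr.le))
    (inv_lt_one_of_one_lt₀ hr)).mul_left (B / r)
  have hfun : (fun i : ℕ => B / r ^ (i + 1)) = fun i => B / r * r⁻¹ ^ i := by
    ext i; rw [inv_pow, pow_succ]; field_simp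
  have hval : B / (r - 1) = B / r * (1 - r⁻¹)⁻¹ := by field_simp
  rwa [hfun, hval]

section AltTail

def altDigit (j : ℕ) : ℕ := 3 - j % 2

lemma altDigit_add_two (j : ℕ) : altDigit (j + 2) = altDigit j := by unfold altDigit; omega

lemma altDigit_add_altDigit_succ (j : ℕ) : altDigit j + altDigit (j + 1) = 5 := by
  unfold altDigit; omega

lemma altDigit_le_three (j : ℕ) : altDigit j ≤ 3 := by unfold altDigit; omega

lemma sum_range_altDigit (p R : ℕ) : ∑ t ∈ range (2 * R), altDigit (p + t) = 5 * R := by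
  induction R with
  | zero => simp
  | succ R ih =>
    have h := altDigit_add_altDigit_succ (p + 2 * R)
    rw [show 2 * (R + 1) = 2 * R + 1 + 1 by ring, sum_range_succ, sum_range_succ, ih,
      ← add_assoc p]
    omega

variable {n : ℕ}

/-- The base-`n` value `0.d₀d₁d₀d₁…` of the periodic digit string `d₀ = altDigit j`,
`d₁ = altDigit (j + 1)`. -/
noncomputable def altTail (n j : ℕ) : ℝ :=
  (altDigit j * n + altDigit (j + 1)) / ((n : ℝ) ^ 2 - 1)

lemma mul_altTail (hn : 2 ≤ n) (j : ℕ) :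
    n * altTail n j = altDigit j + altTail n (j + 1) := by
  have hn' : (2 : ℝ) ≤ n := by exact_mod_cast hn
  have hne : (n : ℝ) ^ 2 - 1 ≠ 0 := by nlinarith
  rw [altTail, altTail, altDigit_add_two]
  field_simp
  ring

lemma altTail_pos (hn : 2 ≤ n) (j : ℕ) : 0 < altTail n j := by
  have hn' : (2 : ℝ) ≤ n := by exact_mod_cast hn
  have h5 : (altDigit j : ℝ) + altDigit (j + 1) = 5 := by
    exact_mod_cast altDigit_add_altDigit_succ j
  apply div_pos <;> nlinarith [(altDigit j).cast_nonneg (α := ℝ),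
    (altDigit (j + 1)).cast_nonneg (α := ℝ)]

lemma altTail_lt_one (hn : 4 ≤ n) (j : ℕ) : altTail n j < 1 := by
  have hn' : (4 : ℝ) ≤ n := by exact_mod_cast hn
  have h5 : (altDigit j : ℝ) + altDigit (j + 1) = 5 := by
    exact_mod_cast altDigit_add_altDigit_succ j
  have h3 : (altDigit j : ℝ) ≤ 3 := by exact_mod_cast altDigit_le_three j
  rw [altTail, div_lt_one (by nlinarith)]
  nlinarith [mul_le_mul_of_nonneg_right h3 (by linarith : (0 : ℝ) ≤ n - 1)]

lemma exists_int_pow_mul_add_altTail (hn : 2 ≤ n) (k : ℤ) (p t : ℕ) :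
    ∃ K : ℤ, (n : ℝ) ^ t * (k + altTail n p) = K + altTail n (p + t) := by
  induction t with
  | zero => exact ⟨k, by simp⟩
  | succ t ih =>
    obtain ⟨K, hK⟩ := ih
    refine ⟨n * K + altDigit (p + t), ?_⟩
    rw [pow_succ', mul_assoc, hK, ← add_assoc, mul_add, mul_altTail hn]
    push_cast
    ring

end AltTail

section PowerSum

variable {n m : ℕ} {e : ℕ → ℕ}

noncomputable def powerSum (n : ℕ) (e : ℕ → ℕ) : ℝ := ∑' i, (n : ℝ) ^ e i / n ^ (i + 1)

/-- The terms `n ^ (e i + j - i - 1)` of `n ^ j * powerSum n e` with negative exponent. -/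
noncomputable def fracTerm (n : ℕ) (e : ℕ → ℕ) (j i : ℕ) : ℝ :=
  if e i + j ≤ i then (n : ℝ) ^ (e i + j) / n ^ (i + 1) else 0

noncomputable def fracTail (n : ℕ) (e : ℕ → ℕ) (j : ℕ) : ℝ := ∑' i, fracTerm n e j i

/-- The number of terms of `n ^ j * powerSum n e` equal to `n⁻¹`; when `e ≤ m` they all have
index `i < j + m + 1`. -/
def hitCount (m : ℕ) (e : ℕ → ℕ) (j : ℕ) : ℕ := #{i ∈ range (j + m + 1) | e i + j = i}

lemma fracTerm_nonneg (j i : ℕ) : 0 ≤ fracTerm n e j i := by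
  unfold fracTerm; split_ifs <;> positivity

lemma fracTerm_le (j i : ℕ) : fracTerm n e j i ≤ n ^ j * ((n : ℝ) ^ e i / n ^ (i + 1)) := by
  unfold fracTerm
  split_ifs
  · exact le_of_eq (by rw [pow_add]; ring)
  · positivity

lemma summable_powerSum (hn : 2 ≤ n) (he : ∀ i, e i ≤ m) :
    Summable fun i => (n : ℝ) ^ e i / n ^ (i + 1) := by
  have hn1 : (1 : ℝ) < n := by exact_mod_cast hn
  refine (hasSum_div_pow_succ hn1 ((n : ℝ) ^ m)).summable.of_nonneg_of_le
    (fun i => by positivity) fun i => ?_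
  gcongr
  · exact hn1.le
  · exact he i

lemma summable_fracTerm (hn : 2 ≤ n) (he : ∀ i, e i ≤ m) (j : ℕ) :
    Summable (fracTerm n e j) :=
  ((summable_powerSum hn he).mul_left _).of_nonneg_of_le (fracTerm_nonneg j) (fracTerm_le j)

lemma fracTail_nonneg (j : ℕ) : 0 ≤ fracTail n e j := tsum_nonneg (fracTerm_nonneg j)

lemma fracTail_le (hn : 2 ≤ n) (he : ∀ i, e i ≤ m) (j : ℕ) :
    fracTail n e j ≤ n ^ m := by
  have hn1 : (1 : ℝ) < n := by exact_mod_cast hn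
  have hn2 : (2 : ℝ) ≤ n := by exact_mod_cast hn
  have hlow : ∑ i ∈ range j, fracTerm n e j i = 0 :=
    sum_eq_zero fun i hi => if_neg (by have := mem_range.1 hi; omega)
  have hshift : ∀ k, fracTerm n e j (k + j) ≤ (n : ℝ) ^ m / n ^ (k + 1) := by
    intro k
    unfold fracTerm
    split_ifs
    · rw [show k + j + 1 = (k + 1) + j by ring, pow_add, pow_add, mul_div_mul_right _ _
        (by positivity)]
      gcongr
      · exact hn1.le
      · exact he _
    · positivity
  calc fracTail n e j = ∑' k, fracTerm n e j (k + j) := by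
        rw [fracTail, ← (summable_fracTerm hn he j).sum_add_tsum_nat_add j, hlow, zero_add]
    _ ≤ (n : ℝ) ^ m / (n - 1) :=
        hasSum_le hshift ((summable_nat_add_iff j).2 (summable_fracTerm hn he j)).hasSum
          (hasSum_div_pow_succ hn1 _)
    _ ≤ n ^ m := div_le_self (by positivity) (by linarith)

lemma mul_fracTerm (hn : 2 ≤ n) (j i : ℕ) :
    n * fracTerm n e j i = (if e i + j = i then 1 else 0) + fracTerm n e (j + 1) i := by
  have hn0 : (n : ℝ) ≠ 0 := by positivity
  unfold fracTerm
  rcases lt_trichotomy (e i + j) i with h | h | h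
  · rw [if_pos h.le, if_neg h.ne, if_pos (by omega), ← add_assoc, pow_succ]
    ring
  · rw [if_pos h.le, if_pos h, if_neg (by omega), h, pow_succ]
    field_simp
    ring
  · rw [if_neg (by omega), if_neg (by omega), if_neg (by omega)]
    ring

lemma mul_fracTail (hn : 2 ≤ n) (he : ∀ i, e i ≤ m) (j : ℕ) :
    n * fracTail n e j = hitCount m e j + fracTail n e (j + 1) := by
  have hhit : HasSum (fun i => if e i + j = i then (1 : ℝ) else 0) (hitCount m e j) := by
    rw [hitCount, card_filter, Nat.cast_sum]
    push_cast
    exact hasSum_sum_of_ne_finset_zero fun i hi =>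
      if_neg (by have := he i; have := mem_range.not.1 hi; omega)
  rw [fracTail, fracTail, ← tsum_mul_left]
  refine HasSum.tsum_eq ?_
  simpa only [mul_fracTerm hn] using hhit.add (summable_fracTerm hn he (j + 1)).hasSum

lemma exists_nat_pow_mul_powerSum (hn : 2 ≤ n) (he : ∀ i, e i ≤ m) (j : ℕ) :
    ∃ A : ℕ, n ^ j * powerSum n e = A + fracTail n e j := by
  have hn0 : (n : ℝ) ≠ 0 := by positivity
  let intTerm : ℕ → ℕ := fun i => if i < e i + j then n ^ (e i + j - (i + 1)) else 0
  have hsplit : ∀ i, n ^ j * ((n : ℝ) ^ e i / n ^ (i + 1)) = intTerm i + fracTerm n e j i := by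
    intro i
    simp only [intTerm, fracTerm]
    split_ifs with hlt hle hle
    · omega
    · push_cast; rw [pow_sub₀ _ hn0 hlt, pow_add]; ring
    · rw [Nat.cast_zero, zero_add, pow_add]; ring
    · omega
  have hint : HasSum (fun i => (intTerm i : ℝ)) (∑ i ∈ range (j + m), intTerm i) := by
    refine hasSum_sum_of_ne_finset_zero fun i hi => ?_
    simp only [intTerm, Nat.cast_eq_zero, ite_eq_right_iff]
    have := he i; have := mem_range.not.1 hi; omega
  refine ⟨∑ i ∈ range (j + m), intTerm i, ?_⟩
  rw [powerSum, ← tsum_mul_left, funext hsplit, Nat.cast_sum]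
  exact (hint.add (summable_fracTerm hn he j).hasSum).tsum_eq

lemma sum_hitCount_le (he : ∀ i, e i ≤ m) (p L : ℕ) :
    ∑ t ∈ range L, hitCount m e (p + t) ≤ L + m + 1 := by
  set s : ℕ → Finset ℕ := fun t => {i ∈ range (p + t + m + 1) | e i + (p + t) = i}
  have hdisj : (range L : Set ℕ).PairwiseDisjoint s := by
    intro t₁ _ t₂ _ hne
    refine disjoint_left.2 fun i h₁ h₂ => hne ?_
    simp only [s, mem_filter] at h₁ h₂
    omega
  have hsub : (range L).biUnion s ⊆ Icc p (p + m + L) := by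
    intro i hi
    simp only [s, mem_biUnion, mem_filter, mem_range] at hi
    obtain ⟨t, ht, -, hi⟩ := hi
    have := he i
    rw [mem_Icc]
    omega
  calc ∑ t ∈ range L, hitCount m e (p + t) = #((range L).biUnion s) := (card_biUnion hdisj).symm
    _ ≤ #(Icc p (p + m + L)) := card_le_card hsub
    _ = L + m + 1 := by rw [Nat.card_Icc]; omega

lemma exists_eq_powerSum_of_mem_linCantor {x : ℝ}
    (hx : x ∈ linCantor n {a : ℕ | ∃ i ≤ m, a = n ^ i}) :
    ∃ e : ℕ → ℕ, (∀ i, e i ≤ m) ∧ x = powerSum n e := by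
  obtain ⟨a, ha, rfl⟩ := hx
  choose e he hae using ha
  exact ⟨e, he, tsum_congr fun i => by rw [hae]; push_cast; rfl⟩

end PowerSum

lemma sum_le_sum_add_of_carry {b : ℤ} (hb : 1 ≤ b) {M : ℕ → ℤ} {c d : ℕ → ℕ}
    (hM : ∀ t, 0 ≤ M t) (hcarry : ∀ t, b * M t + d t = c t + M (t + 1)) (L : ℕ) :
    ∑ t ∈ range L, (d t : ℤ) ≤ ∑ t ∈ range L, (c t : ℤ) + M L := by
  induction L with
  | zero => simpa using hM 0
  | succ L ih =>
    rw [sum_range_succ, sum_range_succ]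
    nlinarith [hcarry L, hM L]

section Carry

variable {n m : ℕ} {e f : ℕ → ℕ}

lemma exists_int_fracTail_add_fracTail_eq (hn : 2 ≤ n) (he : ∀ i, e i ≤ m) (hf : ∀ i, f i ≤ m)
    {p : ℕ} {k : ℤ} (heq : powerSum n e + powerSum n f = (k + altTail n p) / n ^ p) (t : ℕ) :
    ∃ M : ℤ, fracTail n e (p + t) + fracTail n f (p + t) = M + altTail n (p + t) := by
  obtain ⟨A, hA⟩ := exists_nat_pow_mul_powerSum hn he (p + t)
  obtain ⟨B, hB⟩ := exists_nat_pow_mul_powerSum hn hf (p + t)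
  obtain ⟨K, hK⟩ := exists_int_pow_mul_add_altTail hn k p t
  have : (n : ℝ) ^ (p + t) * (powerSum n e + powerSum n f) = n ^ t * (k + altTail n p) := by
    rw [heq, pow_add]; field_simp
  refine ⟨K - A - B, ?_⟩
  push_cast
  linarith

lemma powerSum_add_powerSum_ne (hn : 4 ≤ n) (he : ∀ i, e i ≤ m) (hf : ∀ i, f i ≤ m) (p : ℕ)
    (k : ℤ) : powerSum n e + powerSum n f ≠ (k + altTail n p) / n ^ p := by
  intro heq
  have hn2 : 2 ≤ n := by omega
  -- `M t` is the carry: the integer part of `n ^ (p + t) * z` minus those of the two summands.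
  choose M hM using exists_int_fracTail_add_fracTail_eq hn2 he hf heq
  have hM_nonneg : ∀ t, 0 ≤ M t := by
    intro t
    have : (-1 : ℝ) < M t := by
      linarith [hM t, altTail_lt_one hn (p + t), fracTail_nonneg (n := n) (e := e) (p + t),
        fracTail_nonneg (n := n) (e := f) (p + t)]
    have : (-1 : ℤ) < M t := by exact_mod_cast this
    omega
  have hM_le : ∀ t, M t ≤ 2 * (n ^ m : ℕ) := by
    intro t
    have : (M t : ℝ) ≤ 2 * n ^ m := by
      linarith [hM t, altTail_pos hn2 (p + t), fracTail_le hn2 he (p + t),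
        fracTail_le hn2 hf (p + t)]
    exact_mod_cast this
  have hcarry : ∀ t, (n : ℤ) * M t + altDigit (p + t) =
      (hitCount m e (p + t) + hitCount m f (p + t) : ℕ) + M (t + 1) := by
    intro t
    have h := hM (t + 1)
    rw [← add_assoc] at h
    have : (n : ℝ) * M t + altDigit (p + t) =
        (hitCount m e (p + t) + hitCount m f (p + t) : ℕ) + M (t + 1) := by
      push_cast
      linear_combination -(n : ℝ) * hM t + mul_fracTail hn2 he (p + t) +
        mul_fracTail hn2 hf (p + t) + h - mul_altTail hn2 (p + t)
    exact_mod_cast this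
  -- On `2 * R` places `z` has digit sum `5 * R`, the summands supply at most `4 * R + 2 * m + 2`
  -- units, and the carry absorbs at most `2 * n ^ m`.
  set R := 2 * n ^ m + 2 * m + 3
  have hsum := sum_le_sum_add_of_carry (by omega) hM_nonneg hcarry (2 * R)
  have hd := sum_range_altDigit p R
  have hc := sum_hitCount_le he p (2 * R)
  have hc' := sum_hitCount_le hf p (2 * R)
  rw [← Nat.cast_sum, ← Nat.cast_sum, sum_add_distrib, hd] at hsum
  have := hM_le (2 * R)
  omega

end Carry

lemma dense_setOf_int_add_div_pow {n : ℕ} (hn : 1 < n) {τ : ℕ → ℝ} (hτ₀ : ∀ p, 0 ≤ τ p)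
    (hτ₁ : ∀ p, τ p < 1) : Dense {z : ℝ | ∃ (p : ℕ) (k : ℤ), z = (k + τ p) / n ^ p} := by
  have hn1 : (1 : ℝ) < n := by exact_mod_cast hn
  rw [Metric.dense_iff]
  intro x r hr
  obtain ⟨p, hp⟩ := exists_pow_lt_of_lt_one hr (inv_lt_one_of_one_lt₀ hn1)
  have hnp : (0 : ℝ) < n ^ p := by positivity
  refine ⟨(⌊x * n ^ p⌋ + τ p) / n ^ p, ?_, p, ⌊x * n ^ p⌋, rfl⟩
  have h₁ := Int.floor_le (x * n ^ p)
  have h₂ := Int.sub_one_lt_floor (x * n ^ p)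
  have hp' : 1 < r * n ^ p := by
    simpa [inv_pow, hnp.ne'] using mul_lt_mul_of_pos_right hp hnp
  have hz : (⌊x * n ^ p⌋ + τ p) / n ^ p - x = (⌊x * n ^ p⌋ + τ p - x * n ^ p) / n ^ p := by
    field_simp
  rw [Metric.mem_ball, Real.dist_eq, hz, abs_div, abs_of_pos hnp, div_lt_iff₀ hnp]
  exact (abs_lt.2 ⟨by linarith [hτ₀ p], by linarith [hτ₁ p]⟩).trans hp'

end PowersNotGood

open PowersNotGood in
/-- For `n ≥ 4` and `A = {n^i : 0 ≤ i ≤ m}`, the sumset `C_{A,n} + C_{A,n}`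
contains no interval, i.e. has empty interior, regardless of `m`. -/
theorem powers_not_good (n m : ℕ) (hn : 4 ≤ n) :
    interior (linCantor n {a : ℕ | ∃ i ≤ m, a = n ^ i} +
      linCantor n {a : ℕ | ∃ i ≤ m, a = n ^ i}) = ∅ := by
  rw [interior_eq_empty_iff_dense_compl]
  refine (dense_setOf_int_add_div_pow (n := n) (by omega)
    (fun p => (altTail_pos (n := n) (by omega) p).le)
    (altTail_lt_one hn)).mono ?_
  rintro _ ⟨p, k, rfl⟩ ⟨x, hx, y, hy, hxy⟩
  obtain ⟨e, he, rfl⟩ := exists_eq_powerSum_of_mem_linCantor hx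
  obtain ⟨f, hf, rfl⟩ := exists_eq_powerSum_of_mem_linCantor hy
  exact powerSum_add_powerSum_ne hn he hf p k hxy
end
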